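/- arXiv:2512.24818 — 11 statements merged into one kernel-verified Lean document; each statement's English description precedes it below -/
import Mathlib

section
/- Suppose P is skew-symmetric and there exists a Nash equilibrium π' with π'_a > 0 for all a. Then a probability distribution π is a Nash equilibrium of P if and only if Pπ = 0. -/
open Matrix

theorem stmt_1 {A : Type*} [Fintype A] [Nonempty A]
    (P : Matrix A A ℝ) (hP : P + Pᵀ = 0)
    (hex : ∃ π' : A → ℝ, (∀ a, 0 < π' a) ∧ (∑ a, π' a = 1) ∧
      (∀ a, P.mulVec π' a ≤ 0))
    (π : A → ℝ) (hpos : ∀ a, 0 ≤ π a) (hsum : ∑ a, π a = 1) :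
    (∀ a, P.mulVec π a ≤ 0) ↔ P.mulVec π = 0 := by
  obtain ⟨π', hπ'pos, hπ'sum, hπ'nash⟩ := hex
  constructor
  · intro h
    have hPba : ∀ a b, P b a = - P a b := by
      intro a b
      have := congrFun (congrFun hP b) a
      simp [Matrix.transpose_apply] at this
      linarith
    have key : ∑ a, π' a * P.mulVec π a = - ∑ b, π b * P.mulVec π' b := by
      simp only [Matrix.mulVec, dotProduct, Finset.mul_sum, ← Finset.sum_neg_distrib]
      rw [Finset.sum_comm]
      refine Finset.sum_congr rfl fun b _ => Finset.sum_congr rfl fun a _ => ?_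
      rw [hPba a b]
      ring
    have hterm : ∀ a ∈ Finset.univ, π' a * P.mulVec π a ≤ 0 :=
      fun a _ => mul_nonpos_of_nonneg_of_nonpos (hπ'pos a).le (h a)
    have h1 : ∑ a, π' a * P.mulVec π a ≤ 0 := Finset.sum_nonpos hterm
    have h2 : 0 ≤ ∑ a, π' a * P.mulVec π a := by
      rw [key]
      have : ∑ b, π b * P.mulVec π' b ≤ 0 :=
        Finset.sum_nonpos fun b _ => mul_nonpos_of_nonneg_of_nonpos (hpos b) (hπ'nash b)
      linarith
    have hzero := le_antisymm h1 h2
    funext a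
    have := (Finset.sum_eq_zero_iff_of_nonpos hterm).mp hzero a (Finset.mem_univ a)
    rcases mul_eq_zero.mp this with h' | h'
    · exact absurd h' (hπ'pos a).ne'
    · simpa using h'
  · intro h a
    rw [h]
    simp
end

section
/- Assume P is skew-symmetric and some Nash equilibrium has full support. If π is a probability distribution with π_a > 0 for all a, then the minimizer of π' ↦ D_KL(π' ∥ π) over the set M of Nash equilibria exists, is unique, and has strictly positive coordinates. -/
open Matrix

/-- Kullback–Leibler divergence between finitely supported vectors. -/
noncomputable def klDiv {A : Type*} [Fintype A] (p q : A → ℝ) : ℝ :=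
  ∑ a, p a * Real.log (p a / q a)

theorem stmt_3 {A : Type*} [Fintype A] [Nonempty A]
    (P : Matrix A A ℝ) (hP : P + Pᵀ = 0)
    (M : Set (A → ℝ))
    (hM : M = {π | (∀ a, 0 ≤ π a) ∧ (∑ a, π a = 1) ∧ (∀ a, P.mulVec π a ≤ 0)})
    (hfull : ∃ q ∈ M, ∀ a, 0 < q a)
    (π : A → ℝ) (hπpos : ∀ a, 0 < π a) (hπsum : ∑ a, π a = 1) :
    ∃ q ∈ M, (∀ r ∈ M, klDiv q π ≤ klDiv r π) ∧ (∀ a, 0 < q a) ∧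
      ∀ q' ∈ M, (∀ r ∈ M, klDiv q' π ≤ klDiv r π) → q' = q := by
  classical
  obtain ⟨qs, hqsM, hqspos⟩ := hfull
  set F : (A → ℝ) → ℝ :=
    fun q => ∑ a, (q a * Real.log (q a) - q a * Real.log (π a)) with hFdef
  -- klDiv agrees with F on nonnegative vectors
  have hkl : ∀ q : A → ℝ, (∀ a, 0 ≤ q a) → klDiv q π = F q := by
    intro q hq
    unfold klDiv
    refine Finset.sum_congr rfl fun a _ => ?_
    rcases eq_or_lt_of_le (hq a) with h | h
    · simp [← h]
    · rw [Real.log_div h.ne' (hπpos a).ne']; ring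
  have hmem : ∀ q ∈ M, (∀ a, 0 ≤ q a) ∧ (∑ a, q a = 1) := by
    intro q hq; rw [hM] at hq; exact ⟨hq.1, hq.2.1⟩
  -- convex combinations stay in M
  have hcomb : ∀ x ∈ M, ∀ y ∈ M, ∀ t : ℝ, 0 ≤ t → t ≤ 1 →
      (fun a => (1 - t) * x a + t * y a) ∈ M := by
    intro x hx y hy t ht0 ht1
    rw [hM] at hx hy ⊢
    obtain ⟨hx0, hx1, hx2⟩ := hx
    obtain ⟨hy0, hy1, hy2⟩ := hy
    refine ⟨fun a => add_nonneg (mul_nonneg (by linarith) (hx0 a))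
      (mul_nonneg ht0 (hy0 a)), ?_, ?_⟩
    · rw [Finset.sum_add_distrib, ← Finset.mul_sum, ← Finset.mul_sum, hx1, hy1]; ring
    · intro a
      have hlin : P.mulVec (fun a => (1 - t) * x a + t * y a) a
          = (1 - t) * P.mulVec x a + t * P.mulVec y a := by
        simp only [Matrix.mulVec, dotProduct]
        rw [Finset.mul_sum, Finset.mul_sum, ← Finset.sum_add_distrib]
        exact Finset.sum_congr rfl fun b _ => by ring
      rw [hlin]
      have h1 := hx2 a
      have h2 := hy2 a
      nlinarith
  -- M is closed
  have hclosed : IsClosed M := by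
    rw [hM]
    have hmv : ∀ a, Continuous fun v : A → ℝ => P.mulVec v a := by
      intro a
      simp only [Matrix.mulVec, dotProduct]
      exact continuous_finset_sum _ fun b _ => continuous_const.mul (continuous_apply b)
    simp only [Set.setOf_and, Set.setOf_forall]
    refine IsClosed.inter (isClosed_iInter fun a =>
        isClosed_le continuous_const (continuous_apply a))
      (IsClosed.inter (isClosed_eq (continuous_finset_sum _ fun a _ => continuous_apply a)
        continuous_const)
      (isClosed_iInter fun a => isClosed_le (hmv a) continuous_const))
  -- M is compact
  have hMcomp : IsCompact M := by
    refine IsCompact.of_isClosed_subset (isCompact_Icc (a := (0 : A → ℝ)) (b := 1))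
      hclosed ?_
    intro x hx
    obtain ⟨h0, h1⟩ := hmem x hx
    constructor
    · intro a; exact h0 a
    · intro a
      have : x a ≤ ∑ b, x b := Finset.single_le_sum (fun b _ => h0 b) (Finset.mem_univ a)
      simpa [h1] using this
  -- F is continuous
  have hFcont : Continuous F := by
    refine continuous_finset_sum _ fun a _ => Continuous.sub ?_ ?_
    · exact Real.continuous_mul_log.comp (continuous_apply a)
    · exact (continuous_apply a).mul continuous_const
  have hMne : M.Nonempty := ⟨qs, hqsM⟩
  obtain ⟨q, hqM, hqmin⟩ := hMcomp.exists_isMinOn hMne hFcont.continuousOn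
  have hqmin' : ∀ r ∈ M, F q ≤ F r := fun r hr => isMinOn_iff.mp hqmin r hr
  have hq0 := (hmem q hqM).1
  -- The minimizer has full support
  have hqpos : ∀ a, 0 < q a := by
    by_contra hcon
    push_neg at hcon
    obtain ⟨a0, ha0⟩ := hcon
    have hqa0 : q a0 = 0 := le_antisymm ha0 (hq0 a0)
    set S : Finset A := Finset.univ.filter (fun a => q a = 0) with hS
    have hSne : S.Nonempty := ⟨a0, by simp [hS, hqa0]⟩
    set c : ℝ := ∑ a ∈ S, qs a with hc
    have hcpos : 0 < c := Finset.sum_pos (fun a _ => hqspos a) hSne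
    set K : ℝ := F qs - F q with hK
    have key : ∀ t : ℝ, 0 < t → t < 1 → 0 ≤ t * (K + c * Real.log t) := by
      intro t ht0 ht1
      set qt : A → ℝ := fun a => (1 - t) * q a + t * qs a with hqt
      have hqtM : qt ∈ M := hcomb q hqM qs hqsM t ht0.le ht1.le
      have h1 : F q ≤ F qt := hqmin' qt hqtM
      have h2 : F qt ≤ (1 - t) * F q + t * F qs + t * c * Real.log t := by
        have hterm : ∀ a ∈ Finset.univ,
            qt a * Real.log (qt a) - qt a * Real.log (π a) ≤
            ((1 - t) * (q a * Real.log (q a) - q a * Real.log (π a))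
              + t * (qs a * Real.log (qs a) - qs a * Real.log (π a)))
              + (if a ∈ S then t * qs a * Real.log t else 0) := by
          intro a _
          have hqta : qt a = (1 - t) * q a + t * qs a := rfl
          by_cases haS : a ∈ S
          · have hqa : q a = 0 := by simpa [hS] using haS
            have hqt0 : qt a = t * qs a := by rw [hqta, hqa]; ring
            have hlog : Real.log (t * qs a) = Real.log t + Real.log (qs a) :=
              Real.log_mul ht0.ne' (hqspos a).ne'
            rw [hqt0, hlog, hqa]
            simp only [haS, if_pos]
            ring_nf
            nlinarith [le_refl (0:ℝ)]
          · have hconv := Real.convexOn_mul_log.2 (Set.mem_Ici.mpr (hq0 a))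
              (Set.mem_Ici.mpr (hqspos a).le) (by linarith : (0:ℝ) ≤ 1 - t) ht0.le
              (by ring : (1 - t) + t = 1)
            simp only [smul_eq_mul] at hconv
            simp only [haS, if_neg, not_false_iff, add_zero]
            have : qt a * Real.log (π a)
                = (1 - t) * (q a * Real.log (π a)) + t * (qs a * Real.log (π a)) := by
              rw [hqta]; ring
            rw [hqta] at *
            nlinarith [hconv]
        have hsum := Finset.sum_le_sum hterm
        have hite : ∑ a, (if a ∈ S then t * qs a * Real.log t else 0)
            = t * c * Real.log t := by
          rw [Finset.sum_ite_mem, Finset.univ_inter, hc, ← Finset.sum_mul, ← Finset.mul_sum]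
        calc F qt ≤ ∑ a, (((1 - t) * (q a * Real.log (q a) - q a * Real.log (π a))
              + t * (qs a * Real.log (qs a) - qs a * Real.log (π a)))
              + (if a ∈ S then t * qs a * Real.log t else 0)) := hsum
          _ = (1 - t) * F q + t * F qs + t * c * Real.log t := by
              rw [Finset.sum_add_distrib, Finset.sum_add_distrib, hite, ← Finset.mul_sum,
                ← Finset.mul_sum]
      nlinarith [h1, h2]
    -- choose t small enough to get a contradiction
    set t : ℝ := min (1/2) (Real.exp (-(|K| + 1) / c)) with htdef
    have ht0 : 0 < t := lt_min (by norm_num) (Real.exp_pos _)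
    have ht1 : t < 1 := lt_of_le_of_lt (min_le_left _ _) (by norm_num)
    have hlogt : Real.log t ≤ -(|K| + 1) / c := by
      calc Real.log t ≤ Real.log (Real.exp (-(|K| + 1) / c)) :=
            Real.log_le_log ht0 (min_le_right _ _)
        _ = -(|K| + 1) / c := Real.log_exp _
    have hneg : K + c * Real.log t < 0 := by
      have : c * Real.log t ≤ c * (-(|K| + 1) / c) :=
        mul_le_mul_of_nonneg_left hlogt hcpos.le
      have hcc : c * (-(|K| + 1) / c) = -(|K| + 1) := by
        field_simp
      have hK' : K ≤ |K| := le_abs_self K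
      linarith [this, hcc ▸ this]
    have := key t ht0 ht1
    nlinarith
  -- uniqueness
  have huniq : ∀ q' ∈ M, (∀ r ∈ M, F q' ≤ F r) → q' = q := by
    intro q' hq'M hq'min
    by_contra hne
    obtain ⟨a0, ha0⟩ : ∃ a, q' a ≠ q a := by
      by_contra h
      push_neg at h
      exact hne (funext h)
    have hq'0 := (hmem q' hq'M).1
    have hFeq : F q' = F q := le_antisymm (hq'min q hqM) (hqmin' q' hq'M)
    set m : A → ℝ := fun a => (1 - (1/2 : ℝ)) * q' a + (1/2 : ℝ) * q a with hm
    have hmM : m ∈ M := hcomb q' hq'M q hqM (1/2) (by norm_num) (by norm_num)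
    have hlt : F m < (1/2) * F q' + (1/2) * F q := by
      have hterm : ∀ a ∈ Finset.univ,
          m a * Real.log (m a) - m a * Real.log (π a) ≤
          (1/2) * (q' a * Real.log (q' a) - q' a * Real.log (π a))
            + (1/2) * (q a * Real.log (q a) - q a * Real.log (π a)) := by
        intro a _
        have hconv := Real.convexOn_mul_log.2 (Set.mem_Ici.mpr (hq'0 a))
          (Set.mem_Ici.mpr (hq0 a)) (by norm_num : (0:ℝ) ≤ 1/2)
          (by norm_num : (0:ℝ) ≤ 1/2) (by norm_num)
        simp only [smul_eq_mul] at hconv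
        have hma : m a = (1 - (1/2:ℝ)) * q' a + (1/2:ℝ) * q a := rfl
        rw [hma]
        have h12 : (1 - (1/2:ℝ)) = 1/2 := by norm_num
        rw [h12] at *
        nlinarith [hconv]
      have hstrict : m a0 * Real.log (m a0) - m a0 * Real.log (π a0) <
          (1/2) * (q' a0 * Real.log (q' a0) - q' a0 * Real.log (π a0))
            + (1/2) * (q a0 * Real.log (q a0) - q a0 * Real.log (π a0)) := by
        have hconv := Real.strictConvexOn_mul_log.2 (Set.mem_Ici.mpr (hq'0 a0))
          (Set.mem_Ici.mpr (hq0 a0)) ha0 (by norm_num : (0:ℝ) < 1/2)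
          (by norm_num : (0:ℝ) < 1/2) (by norm_num)
        simp only [smul_eq_mul] at hconv
        have hma : m a0 = (1 - (1/2:ℝ)) * q' a0 + (1/2:ℝ) * q a0 := rfl
        rw [hma]
        have h12 : (1 - (1/2:ℝ)) = 1/2 := by norm_num
        rw [h12] at *
        nlinarith [hconv]
      have hsum : F m < ∑ a, ((1/2) * (q' a * Real.log (q' a) - q' a * Real.log (π a))
            + (1/2) * (q a * Real.log (q a) - q a * Real.log (π a))) :=
        Finset.sum_lt_sum hterm ⟨a0, Finset.mem_univ a0, hstrict⟩
      calc F m < _ := hsum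
        _ = (1/2) * F q' + (1/2) * F q := by
            rw [Finset.sum_add_distrib, ← Finset.mul_sum, ← Finset.mul_sum]
    have hge : F q ≤ F m := hqmin' m hmM
    rw [hFeq] at hlt
    linarith
  refine ⟨q, hqM, ?_, hqpos, ?_⟩
  · intro r hr
    rw [hkl q hq0, hkl r (hmem r hr).1]
    exact hqmin' r hr
  · intro q' hq'M hq'kl
    refine huniq q' hq'M fun r hr => ?_
    have := hq'kl r hr
    rwa [hkl q' (hmem q' hq'M).1, hkl r (hmem r hr).1] at this
end

section
/- Along OMWU dynamics, the KL projection onto the Nash equilibrium set is invariant: p(π̂^(1)) = p(π̂^(t)) for all t ≥ 1, where p(π) = argmin_{π'∈M} D_KL(π' ∥ π). -/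
/-!
For skew-symmetric `P` the form `x ⬝ᵥ P *ᵥ y` is alternating. A fully supported equilibrium `s`
therefore has `P *ᵥ s = 0`, and then every `q` with `P *ᵥ q ≤ 0` has
`s ⬝ᵥ P *ᵥ q = -(q ⬝ᵥ P *ᵥ s) = 0`, forcing `P *ᵥ q = 0`: equilibria are orthogonal to the range
of `Pᵀ`. Since the OMWU step adds `η P π - M̂` to `log π̂`, for an equilibrium `q` the divergence
`KL(q ‖ π̂⁽ᵗ⁾)` changes only by the constant `M̂⁽ᵗ⁺¹⁾`, so its minimiser over the equilibria
never moves.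
-/

open Matrix

namespace Matrix

variable {A : Type*} [Fintype A]

theorem dotProduct_mulVec_eq_neg_of_add_transpose_eq_zero {P : Matrix A A ℝ} (hP : P + Pᵀ = 0)
    (x y : A → ℝ) : x ⬝ᵥ P *ᵥ y = -(y ⬝ᵥ P *ᵥ x) := by
  rw [dotProduct_mulVec, ← mulVec_transpose, eq_neg_of_add_eq_zero_right hP, neg_mulVec,
    neg_dotProduct, dotProduct_comm]

theorem eq_zero_of_dotProduct_eq_zero_of_pos_of_nonpos {s v : A → ℝ} (hs : ∀ a, 0 < s a)
    (hv : ∀ a, v a ≤ 0) (hsv : s ⬝ᵥ v = 0) : v = 0 := by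
  have hterm : ∀ a ∈ Finset.univ, s a * v a ≤ 0 := fun a _ =>
    mul_nonpos_of_nonneg_of_nonpos (hs a).le (hv a)
  funext a
  have := (Finset.sum_eq_zero_iff_of_nonpos hterm).mp hsv a (Finset.mem_univ a)
  exact (mul_eq_zero.mp this).resolve_left (hs a).ne'

theorem mulVec_eq_zero_of_add_transpose_eq_zero {P : Matrix A A ℝ} (hP : P + Pᵀ = 0)
    {s q : A → ℝ} (hs : ∀ a, 0 < s a) (hPs : ∀ a, (P *ᵥ s) a ≤ 0) (hPq : ∀ a, (P *ᵥ q) a ≤ 0) :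
    P *ᵥ q = 0 := by
  have hskew := dotProduct_mulVec_eq_neg_of_add_transpose_eq_zero hP
  have hPs0 : P *ᵥ s = 0 :=
    eq_zero_of_dotProduct_eq_zero_of_pos_of_nonpos hs hPs (by linarith [hskew s s])
  refine eq_zero_of_dotProduct_eq_zero_of_pos_of_nonpos hs hPq ?_
  rw [hskew, hPs0, dotProduct_zero, neg_zero]

theorem dotProduct_mulVec_eq_zero_of_add_transpose_eq_zero {P : Matrix A A ℝ}
    (hP : P + Pᵀ = 0) {s q : A → ℝ} (hs : ∀ a, 0 < s a) (hPs : ∀ a, (P *ᵥ s) a ≤ 0)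
    (hPq : ∀ a, (P *ᵥ q) a ≤ 0) (x : A → ℝ) : q ⬝ᵥ P *ᵥ x = 0 := by
  rw [dotProduct_mulVec_eq_neg_of_add_transpose_eq_zero hP,
    mulVec_eq_zero_of_add_transpose_eq_zero hP hs hPs hPq, dotProduct_zero, neg_zero]

end Matrix

theorem klDiv_eq_of_log_eq {A : Type*} [Fintype A] {q h h' g : A → ℝ} {c : ℝ}
    (hq : ∑ a, q a = 1) (hh : ∀ a, h a ≠ 0) (hh' : ∀ a, h' a ≠ 0)
    (hlog : ∀ a, Real.log (h' a) = Real.log (h a) + g a - c) :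
    klDiv q h' = klDiv q h + c - q ⬝ᵥ g := by
  have hterm : ∀ a, q a * Real.log (q a / h' a) =
      q a * Real.log (q a / h a) + q a * c - q a * g a := by
    intro a
    rcases eq_or_ne (q a) 0 with hqa | hqa
    · simp [hqa]
    · rw [Real.log_div hqa (hh' a), Real.log_div hqa (hh a), hlog a]
      ring
  simp only [klDiv, dotProduct, hterm, Finset.sum_sub_distrib, Finset.sum_add_distrib,
    ← Finset.sum_mul, hq, one_mul]

theorem eq_add_sum_Ico_of_eq_add {α : Type*} {S : Set α} {F : ℕ → α → ℝ} {d : ℕ → ℝ} {m : ℕ}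
    (hF : ∀ n, m ≤ n → ∀ x ∈ S, F (n + 1) x = F n x + d n) :
    ∀ n, m ≤ n → ∀ x ∈ S, F n x = F m x + ∑ i ∈ Finset.Ico m n, d i := by
  intro n hn
  induction n, hn using Nat.le_induction with
  | base => simp
  | succ n hmn ih =>
    intro x hx
    rw [hF n hmn x hx, ih x hx, Finset.sum_Ico_succ_top hmn]
    ring

theorem mem_and_forall_le_iff_of_eq_add_const {α : Type*} {S : Set α} {f g : α → ℝ} {c : ℝ}
    (hfg : ∀ x ∈ S, f x = g x + c) (q : α) :
    (q ∈ S ∧ ∀ r ∈ S, f q ≤ f r) ↔ (q ∈ S ∧ ∀ r ∈ S, g q ≤ g r) := by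
  refine and_congr_right fun hq => forall₂_congr fun r hr => ?_
  rw [hfg q hq, hfg r hr, add_le_add_iff_right]

theorem stmt_4_general {A : Type*} [Fintype A]
    (P : Matrix A A ℝ) (hP : P + Pᵀ = 0)
    (M : Set (A → ℝ))
    (hM : M = {π | (∀ a, 0 ≤ π a) ∧ (∑ a, π a = 1) ∧ (∀ a, P.mulVec π a ≤ 0)})
    (hfull : ∃ q ∈ M, ∀ a, 0 < q a)
    (η : ℝ) (pi hpi : ℕ → A → ℝ) (Mh : ℕ → ℝ)
    (hhpidist : ∀ t, (∀ a, 0 < hpi t a) ∧ ∑ a, hpi t a = 1)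
    (hupdh : ∀ t, 1 ≤ t → ∀ a,
      Real.log (hpi (t + 1) a) = Real.log (hpi t a) + η * P.mulVec (pi t) a - Mh (t + 1)) :
    ∀ t, 1 ≤ t → ∀ q : A → ℝ,
      (q ∈ M ∧ ∀ r ∈ M, klDiv q (hpi 1) ≤ klDiv r (hpi 1)) ↔
      (q ∈ M ∧ ∀ r ∈ M, klDiv q (hpi t) ≤ klDiv r (hpi t)) := by
  intro t ht q
  obtain ⟨s, hsM, hs⟩ := hfull
  rw [hM] at hsM
  have hstep : ∀ n, 1 ≤ n → ∀ r ∈ M,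
      klDiv r (hpi (n + 1)) = klDiv r (hpi n) + Mh (n + 1) := by
    intro n hn r hr
    rw [hM] at hr
    have hrP : r ⬝ᵥ (η • P *ᵥ pi n) = 0 := by
      rw [dotProduct_smul,
        dotProduct_mulVec_eq_zero_of_add_transpose_eq_zero hP hs hsM.2.2 hr.2.2, smul_zero]
    rw [klDiv_eq_of_log_eq hr.2.1 (fun a => ((hhpidist n).1 a).ne')
      (fun a => ((hhpidist (n + 1)).1 a).ne') (hupdh n hn)]
    exact sub_eq_self.mpr hrP
  exact (mem_and_forall_le_iff_of_eq_add_const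
    (eq_add_sum_Ico_of_eq_add (F := fun n r => klDiv r (hpi n)) hstep t ht) q).symm

theorem stmt_4 {A : Type*} [Fintype A] [Nonempty A]
    (P : Matrix A A ℝ) (hP : P + Pᵀ = 0)
    (M : Set (A → ℝ))
    (hM : M = {π | (∀ a, 0 ≤ π a) ∧ (∑ a, π a = 1) ∧ (∀ a, P.mulVec π a ≤ 0)})
    (hfull : ∃ q ∈ M, ∀ a, 0 < q a)
    (η : ℝ) (pi hpi : ℕ → A → ℝ) (Mn Mh : ℕ → ℝ)
    (hpidist : ∀ t, (∀ a, 0 < pi t a) ∧ ∑ a, pi t a = 1)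
    (hhpidist : ∀ t, (∀ a, 0 < hpi t a) ∧ ∑ a, hpi t a = 1)
    (hinit : pi 0 = hpi 1)
    (hupd : ∀ t, 1 ≤ t → ∀ a,
      Real.log (pi t a) = Real.log (hpi t a) + η * P.mulVec (pi (t - 1)) a - Mn t)
    (hupdh : ∀ t, 1 ≤ t → ∀ a,
      Real.log (hpi (t + 1) a) = Real.log (hpi t a) + η * P.mulVec (pi t) a - Mh (t + 1)) :
    ∀ t, 1 ≤ t → ∀ q : A → ℝ,
      (q ∈ M ∧ ∀ r ∈ M, klDiv q (hpi 1) ≤ klDiv r (hpi 1)) ↔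
      (q ∈ M ∧ ∀ r ∈ M, klDiv q (hpi t) ≤ klDiv r (hpi t)) :=
  stmt_4_general P hP M hM hfull η pi hpi Mh hhpidist hupdh
end

section
/- Let N ⊆ R^n be a linear subspace. There exists a constant C(N) < 1 such that for all a, b ∈ R^n and r ∈ N with sign(a_i) = sign(b_i) for every i and b ∈ N^⊥, one has |⟨r, a⟩| ≤ C(N) · ‖r‖₂ · ‖a‖₂. -/
/-!
Since `b ⊥ N`, no nonzero `a ∈ N` can lie in the closed orthant face cut out by the sign
pattern of `b`: there `⟪a, b⟫ = ∑ |aᵢ| |bᵢ|`, which vanishes only for `a = 0`. The union of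
these faces over the finitely many sign patterns of `Nᗮ` is a closed cone meeting `N` only
in `0`, so by compactness of its unit sphere, `‖P_N a‖ ≤ C ‖a‖` on it for some `C < 1`. Then `|⟪r, a⟫| = |⟪r, P_N a⟫| ≤ C ‖r‖ ‖a‖`.
-/

open RealInnerProductSpace Set

section ClosedCone

variable {E : Type*} [NormedAddCommGroup E] [InnerProductSpace ℝ E] [FiniteDimensional ℝ E]

theorem exists_norm_starProjection_le_of_isClosed_cone (N : Submodule ℝ E) {K : Set E}
    (hK : IsClosed K) (hK_smul : ∀ c : ℝ, 0 < c → ∀ a ∈ K, c • a ∈ K)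
    (hKN : ∀ a ∈ K, a ∈ N → a = 0) :
    ∃ C < 1, ∀ a ∈ K, ‖N.starProjection a‖ ≤ C * ‖a‖ := by
  have hgap : ∀ a ∈ K ∩ Metric.sphere 0 1, 0 < 1 - ‖N.starProjection a‖ := by
    rintro a ⟨haK, ha1⟩
    rw [mem_sphere_zero_iff_norm] at ha1
    have ha_notMem : a ∉ N := fun haN ↦ by simp [hKN a haK haN] at ha1
    rw [N.mem_iff_norm_starProjection, ha1] at ha_notMem
    exact sub_pos.mpr ((ha1 ▸ N.norm_starProjection_apply_le a).lt_of_ne ha_notMem)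
  obtain ⟨ε, hε, hεle⟩ := ((isCompact_sphere 0 1).inter_left hK).exists_forall_le'
    (by fun_prop) hgap
  refine ⟨1 - ε, by linarith, fun a haK ↦ ?_⟩
  rcases eq_or_ne a 0 with rfl | ha0
  · simp
  have hnorm : 0 < ‖a‖ := norm_pos_iff.mpr ha0
  have hunit := hεle (‖a‖⁻¹ • a) ⟨hK_smul _ (inv_pos.mpr hnorm) a haK, by simp [norm_smul, ha0]⟩
  rw [map_smul, norm_smul, norm_inv, norm_norm, ← div_eq_inv_mul, le_sub_comm,
    div_le_iff₀ hnorm] at hunit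
  linarith

theorem exists_abs_inner_le_of_isClosed_cone (N : Submodule ℝ E) {K : Set E}
    (hK : IsClosed K) (hK_smul : ∀ c : ℝ, 0 < c → ∀ a ∈ K, c • a ∈ K)
    (hKN : ∀ a ∈ K, a ∈ N → a = 0) :
    ∃ C < 1, ∀ r ∈ N, ∀ a ∈ K, |⟪r, a⟫| ≤ C * ‖r‖ * ‖a‖ := by
  obtain ⟨C, hC, hle⟩ := exists_norm_starProjection_le_of_isClosed_cone N hK hK_smul hKN
  refine ⟨C, hC, fun r hr a ha ↦ ?_⟩
  calc |⟪r, a⟫| = |⟪r, N.starProjection a⟫| := by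
        rw [← N.inner_starProjection_left_eq_right, N.starProjection_eq_self_iff.mpr hr]
    _ ≤ ‖r‖ * ‖N.starProjection a‖ := abs_real_inner_le_norm _ _
    _ ≤ ‖r‖ * (C * ‖a‖) := by gcongr; exact hle a ha
    _ = C * ‖r‖ * ‖a‖ := by ring

end ClosedCone

theorem Real.sign_mul_self (x : ℝ) : Real.sign x * x = |x| := by
  rcases lt_trichotomy x 0 with hx | rfl | hx
  · rw [Real.sign_of_neg hx, abs_of_neg hx, neg_one_mul]
  · simp
  · rw [Real.sign_of_pos hx, abs_of_pos hx, one_mul]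

theorem Real.mul_eq_abs_mul_abs_of_abs_eq_sign_mul {x y : ℝ} (h : |x| = Real.sign y * x) :
    x * y = |x| * |y| := by
  rcases lt_trichotomy y 0 with hy | rfl | hy
  · rw [Real.sign_of_neg hy] at h
    rw [h, abs_of_neg hy]; ring
  · simp
  · rw [Real.sign_of_pos hy, one_mul] at h
    rw [h, abs_of_pos hy]

section SignCone

variable {ι : Type*}

/-- For `σ` with values in `{-1, 0, 1}`, the closure of the set of vectors of sign pattern `σ`. -/
def signCone (σ : ι → ℝ) : Set (EuclideanSpace ℝ ι) :=
  {a | ∀ i, |a i| = σ i * a i}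

theorem isClosed_signCone [Fintype ι] (σ : ι → ℝ) : IsClosed (signCone σ) := by
  rw [signCone, ofPred_forall]
  exact isClosed_iInter fun i ↦ isClosed_eq (by fun_prop) (by fun_prop)

theorem smul_mem_signCone {σ : ι → ℝ} {a : EuclideanSpace ℝ ι} {c : ℝ} (hc : 0 ≤ c)
    (ha : a ∈ signCone σ) : c • a ∈ signCone σ := fun i ↦ by
  simp only [PiLp.smul_apply, smul_eq_mul, abs_mul, abs_of_nonneg hc, ha i]
  ring

theorem mem_signCone_sign {a b : EuclideanSpace ℝ ι}
    (h : ∀ i, Real.sign (a i) = Real.sign (b i)) :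
    a ∈ signCone (fun i ↦ Real.sign (b i)) := fun i ↦ by
  simp only [← h i, Real.sign_mul_self]

theorem eq_zero_of_mem_signCone_sign_of_inner_eq_zero [Fintype ι] {a b : EuclideanSpace ℝ ι}
    (ha : a ∈ signCone (fun i ↦ Real.sign (b i))) (hab : ⟪a, b⟫ = 0) : a = 0 := by
  have hsum : ∑ i, |a i| * |b i| = 0 := by
    simpa [PiLp.inner_apply, mul_comm (b _),
      Real.mul_eq_abs_mul_abs_of_abs_eq_sign_mul (ha _)] using hab
  ext i
  rcases mul_eq_zero.mp ((Finset.sum_eq_zero_iff_of_nonneg fun j _ ↦ by positivity).mp hsum i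
    (Finset.mem_univ i)) with hai | hbi
  · exact abs_eq_zero.mp hai
  · simpa [abs_eq_zero.mp hbi] using ha i

theorem finite_range_sign [Finite ι] :
    (range fun (b : EuclideanSpace ℝ ι) i ↦ Real.sign (b i)).Finite := by
  refine (Set.Finite.pi' fun _ ↦ toFinite ({-1, 0, 1} : Set ℝ)).subset ?_
  rintro _ ⟨b, rfl⟩ i
  simpa using Real.sign_apply_eq (b i)

theorem isClosed_biUnion_signCone_sign [Fintype ι] (B : Set (EuclideanSpace ℝ ι)) :
    IsClosed (⋃ b ∈ B, signCone fun i ↦ Real.sign (b i)) := by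
  rw [← biUnion_image (g := signCone)]
  exact (finite_range_sign.subset (image_subset_range _ _)).isClosed_biUnion
    fun σ _ ↦ isClosed_signCone σ

end SignCone

theorem stmt_5 (n : ℕ) (N : Submodule ℝ (EuclideanSpace ℝ (Fin n))) :
    ∃ C : ℝ, C < 1 ∧
      ∀ (a b : EuclideanSpace ℝ (Fin n)) (r : EuclideanSpace ℝ (Fin n)),
        r ∈ N → b ∈ Nᗮ → (∀ i, Real.sign (a i) = Real.sign (b i)) →
        |⟪r, a⟫| ≤ C * ‖r‖ * ‖a‖ := by
  obtain ⟨C, hC, hle⟩ := exists_abs_inner_le_of_isClosed_cone N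
    (K := ⋃ b ∈ (Nᗮ : Set (EuclideanSpace ℝ (Fin n))), signCone fun i ↦ Real.sign (b i))
    (isClosed_biUnion_signCone_sign _)
    (fun c hc a ha ↦ by
      obtain ⟨b, hb, ha⟩ := mem_iUnion₂.mp ha
      exact mem_biUnion hb (smul_mem_signCone hc.le ha))
    (fun a ha haN ↦ by
      obtain ⟨b, hb, ha⟩ := mem_iUnion₂.mp ha
      exact eq_zero_of_mem_signCone_sign_of_inner_eq_zero ha
        (Submodule.inner_right_of_mem_orthogonal haN hb))
  exact ⟨C, hC, fun a b r hr hb hsign ↦ hle r hr a (mem_biUnion hb (mem_signCone_sign hsign))⟩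
end

section
/- Let (x_n)_{n=0}^t be a decreasing real sequence and f a strictly positive, non-decreasing, continuously differentiable function on [x_t, x_0] with x_n − x_{n+1} ≥ f(x_{n+1}) for all n < t. Then ln(f(x_0)/f(x_t)) + ∫_{x_t}^{x_0} dx/f(x) ≥ t. -/
theorem stmt_8 (t : ℕ) (x : ℕ → ℝ) (f : ℝ → ℝ)
    (hdec : ∀ n, n < t → x (n + 1) < x n)
    (hpos : ∀ y ∈ Set.Icc (x t) (x 0), 0 < f y)
    (hmono : MonotoneOn f (Set.Icc (x t) (x 0)))
    (hsmooth : ContDiffOn ℝ 1 f (Set.Icc (x t) (x 0)))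
    (hgap : ∀ n, n < t → f (x (n + 1)) ≤ x n - x (n + 1)) :
    (t : ℝ) ≤ Real.log (f (x 0) / f (x t)) + ∫ y in (x t)..(x 0), 1 / f y := by
  have hxle : ∀ m n, m ≤ n → n ≤ t → x n ≤ x m := by
    intro m n hmn hnt
    induction n with
    | zero => simp [Nat.le_zero.mp hmn]
    | succ k ih =>
      rcases Nat.lt_or_ge m (k + 1) with h | h
      · have h1 : x (k + 1) < x k := hdec k (by omega)
        have h2 : x k ≤ x m := ih (Nat.lt_succ_iff.mp h) (by omega)
        linarith
      · have : m = k + 1 := le_antisymm hmn h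
        simp [this]
  have hmem : ∀ n, n ≤ t → x n ∈ Set.Icc (x t) (x 0) :=
    fun n hn => ⟨hxle n t hn le_rfl, hxle 0 n (Nat.zero_le n) hn⟩
  have hfc : ContinuousOn f (Set.Icc (x t) (x 0)) := hsmooth.continuousOn
  have hinv : ContinuousOn (fun y => 1 / f y) (Set.Icc (x t) (x 0)) :=
    ContinuousOn.div continuousOn_const hfc (fun y hy => (hpos y hy).ne')
  have hsub : ∀ n, n < t → Set.uIcc (x (n + 1)) (x n) ⊆ Set.Icc (x t) (x 0) := by
    intro n hn
    rw [Set.uIcc_of_le (le_of_lt (hdec n hn))]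
    exact Set.Icc_subset_Icc (hmem (n + 1) (by omega)).1 (hmem n (by omega)).2
  have hint : ∀ n, n < t →
      IntervalIntegrable (fun y => 1 / f y) MeasureTheory.volume (x (n + 1)) (x n) := by
    intro n hn
    exact (hinv.mono (hsub n hn)).intervalIntegrable
  have key : ∀ n, n < t →
      1 ≤ (Real.log (f (x n)) - Real.log (f (x (n + 1)))) +
        ∫ y in (x (n + 1))..(x n), 1 / f y := by
    intro n hn
    have hxn : x n ∈ Set.Icc (x t) (x 0) := hmem n (by omega)
    have hxn1 : x (n + 1) ∈ Set.Icc (x t) (x 0) := hmem (n + 1) (by omega)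
    have ha : 0 < f (x (n + 1)) := hpos _ hxn1
    have hb : 0 < f (x n) := hpos _ hxn
    have hab : f (x (n + 1)) ≤ f (x n) := hmono hxn1 hxn (le_of_lt (hdec n hn))
    -- integral lower bound
    have hc : ∫ y in (x (n + 1))..(x n), (1 / f (x n)) ≤
        ∫ y in (x (n + 1))..(x n), 1 / f y := by
      apply intervalIntegral.integral_mono_on (le_of_lt (hdec n hn))
        intervalIntegrable_const (hint n hn)
      intro y hy
      have hy' : y ∈ Set.Icc (x t) (x 0) := by
        rw [← Set.uIcc_of_le (le_of_lt (hdec n hn))] at hy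
        exact hsub n hn hy
      have hfy : 0 < f y := hpos y hy'
      have : f y ≤ f (x n) := hmono hy' hxn hy.2
      exact one_div_le_one_div_of_le hfy this
    rw [intervalIntegral.integral_const] at hc
    have h1 : f (x (n + 1)) / f (x n) ≤ ∫ y in (x (n + 1))..(x n), 1 / f y := by
      have hgap' := hgap n hn
      have : f (x (n + 1)) / f (x n) ≤ (x n - x (n + 1)) * (1 / f (x n)) := by
        rw [mul_one_div]
        gcongr
      simpa using this.trans (by simpa using hc)
    have h2 : 1 - f (x (n + 1)) / f (x n) ≤
        Real.log (f (x n)) - Real.log (f (x (n + 1))) := by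
      have := Real.log_le_sub_one_of_pos (div_pos ha hb)
      rw [Real.log_div ha.ne' hb.ne'] at this
      linarith
    linarith
  have hsum : (t : ℝ) ≤ ∑ n ∈ Finset.range t,
      ((Real.log (f (x n)) - Real.log (f (x (n + 1)))) +
        ∫ y in (x (n + 1))..(x n), 1 / f y) := by
    calc (t : ℝ) = ∑ _n ∈ Finset.range t, (1 : ℝ) := by simp
    _ ≤ _ := Finset.sum_le_sum (fun n hn => key n (Finset.mem_range.mp hn))
  rw [Finset.sum_add_distrib] at hsum
  have hA : ∑ n ∈ Finset.range t,
      (Real.log (f (x n)) - Real.log (f (x (n + 1)))) =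
      Real.log (f (x 0)) - Real.log (f (x t)) :=
    Finset.sum_range_sub' (fun n => Real.log (f (x n))) t
  have hB : ∑ n ∈ Finset.range t, (∫ y in (x (n + 1))..(x n), 1 / f y) =
      ∫ y in (x t)..(x 0), 1 / f y := by
    have hadj : ∑ n ∈ Finset.range t, (∫ y in (x n)..(x (n + 1)), 1 / f y) =
        ∫ y in (x 0)..(x t), 1 / f y := by
      apply intervalIntegral.sum_integral_adjacent_intervals
      intro k hk
      exact (hint k hk).symm
    have : ∑ n ∈ Finset.range t, (∫ y in (x (n + 1))..(x n), 1 / f y) =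
        -∑ n ∈ Finset.range t, (∫ y in (x n)..(x (n + 1)), 1 / f y) := by
      rw [← Finset.sum_neg_distrib]
      exact Finset.sum_congr rfl fun n _ => (intervalIntegral.integral_symm _ _)
    rw [this, hadj, ← intervalIntegral.integral_symm]
  rw [hA, hB] at hsum
  have hb0 : 0 < f (x 0) := hpos _ (hmem 0 (Nat.zero_le t))
  have hbt : 0 < f (x t) := hpos _ (hmem t le_rfl)
  rw [Real.log_div hb0.ne' hbt.ne']
  linarith
end

section
/- In OMWU dynamics, the normalizing constant satisfies |M̂^(t+1)| ≤ e^{ηL} |A| K̂^(t+1), where M̂^(t+1) = log⟨π̂^(t), exp(ηPπ^(t))⟩ and K̂^(t+1) = max_a π̂^(t)_a |η(Pπ^(t))_a|. -/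
open Matrix

theorem stmt_12 {A : Type*} [Fintype A] [Nonempty A]
    (P : Matrix A A ℝ) (hP : P + Pᵀ = 0) (η L : ℝ) (hη : 0 < η)
    (hL : L = Finset.univ.sup' Finset.univ_nonempty
      (fun ab : A × A => |P ab.1 ab.2|))
    (hpit piT : A → ℝ)
    (hhpidist : (∀ a, 0 ≤ hpit a) ∧ ∑ a, hpit a = 1)
    (hpidist : (∀ a, 0 ≤ piT a) ∧ ∑ a, piT a = 1)
    (Mhat Khat : ℝ)
    (hM : Mhat = Real.log (∑ a, hpit a * Real.exp (η * P.mulVec piT a)))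
    (hK : Khat = Finset.univ.sup' Finset.univ_nonempty
      (fun a => hpit a * |η * P.mulVec piT a|)) :
    |Mhat| ≤ Real.exp (η * L) * (Fintype.card A : ℝ) * Khat := by
  obtain ⟨hpos, hsum1⟩ := hhpidist
  obtain ⟨ppos, psum1⟩ := hpidist
  set x : A → ℝ := fun a => η * P.mulVec piT a with hxdef
  have hxle : ∀ a, |x a| ≤ η * L := by
    intro a
    have h1 : |P.mulVec piT a| ≤ L := by
      rw [Matrix.mulVec, dotProduct]
      calc |∑ b, P a b * piT b| ≤ ∑ b, |P a b * piT b| :=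
            Finset.abs_sum_le_sum_abs _ _
        _ ≤ ∑ b, L * piT b := by
            apply Finset.sum_le_sum; intro b _
            rw [abs_mul, abs_of_nonneg (ppos b)]
            exact mul_le_mul_of_nonneg_right
              (by rw [hL]; exact Finset.le_sup' (fun ab : A × A => |P ab.1 ab.2|) (Finset.mem_univ (a, b))) (ppos b)
        _ = L := by rw [← Finset.mul_sum, psum1, mul_one]
    calc |x a| = η * |P.mulVec piT a| := by
          simp [hxdef, abs_mul, abs_of_pos hη]
      _ ≤ η * L := mul_le_mul_of_nonneg_left h1 hη.le
  set S : ℝ := ∑ a, hpit a * Real.exp (x a) with hSdef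
  have hKa : ∀ a, hpit a * |x a| ≤ Khat := fun a =>
    hK ▸ Finset.le_sup' (fun a => hpit a * |η * P.mulVec piT a|) (Finset.mem_univ a)
  have hsumK : ∑ a, hpit a * |x a| ≤ (Fintype.card A : ℝ) * Khat := by
    have := Finset.sum_le_card_nsmul Finset.univ (fun a => hpit a * |x a|) Khat
      (fun a _ => hKa a)
    simpa [nsmul_eq_mul, Finset.card_univ] using this
  have hsumnn : 0 ≤ ∑ a, hpit a * |x a| :=
    Finset.sum_nonneg fun a _ => mul_nonneg (hpos a) (abs_nonneg _)
  have hSlow : Real.exp (-(η * L)) ≤ S := by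
    calc Real.exp (-(η * L)) = ∑ a, hpit a * Real.exp (-(η * L)) := by
          rw [← Finset.sum_mul, hsum1, one_mul]
      _ ≤ S := Finset.sum_le_sum fun a _ =>
          mul_le_mul_of_nonneg_left
            (Real.exp_le_exp.mpr (neg_le_of_abs_le (hxle a))) (hpos a)
  have hSpos : 0 < S := lt_of_lt_of_le (Real.exp_pos _) hSlow
  have hexpnn : 0 < Real.exp (η * L) := Real.exp_pos _
  -- upper bound
  have hup : Real.log S ≤ Real.exp (η * L) * ∑ a, hpit a * |x a| := by
    have h1 : Real.log S ≤ S - 1 := Real.log_le_sub_one_of_pos hSpos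
    have h2 : S - 1 = ∑ a, hpit a * (Real.exp (x a) - 1) := by
      simp [hSdef, mul_sub, Finset.sum_sub_distrib, hsum1]
    have h3 : ∀ a, hpit a * (Real.exp (x a) - 1) ≤ Real.exp (η * L) * (hpit a * |x a|) := by
      intro a
      have hx1 : Real.exp (x a) - 1 ≤ |x a| * Real.exp (η * L) := by
        rcases le_or_gt (x a) 0 with h | h
        · have : Real.exp (x a) ≤ 1 := Real.exp_le_one_iff.mpr h
          have := mul_nonneg (abs_nonneg (x a)) hexpnn.le
          linarith
        · have hb := Real.add_one_le_exp (-(x a))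
          have hinv : Real.exp (-(x a)) * Real.exp (x a) = 1 := by
            rw [← Real.exp_add]; simp
          have hxx : Real.exp (x a) - 1 ≤ x a * Real.exp (x a) := by
            nlinarith [Real.exp_pos (x a)]
          have habs : x a = |x a| := (abs_of_pos h).symm
          have hle : Real.exp (x a) ≤ Real.exp (η * L) :=
            Real.exp_le_exp.mpr (le_trans (le_abs_self _) (hxle a))
          calc Real.exp (x a) - 1 ≤ x a * Real.exp (x a) := hxx
            _ ≤ |x a| * Real.exp (η * L) := by
                rw [← habs]; exact mul_le_mul_of_nonneg_left hle h.le
      calc hpit a * (Real.exp (x a) - 1) ≤ hpit a * (|x a| * Real.exp (η * L)) :=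
            mul_le_mul_of_nonneg_left hx1 (hpos a)
        _ = Real.exp (η * L) * (hpit a * |x a|) := by ring
    calc Real.log S ≤ S - 1 := h1
      _ = ∑ a, hpit a * (Real.exp (x a) - 1) := h2
      _ ≤ ∑ a, Real.exp (η * L) * (hpit a * |x a|) :=
          Finset.sum_le_sum fun a _ => h3 a
      _ = Real.exp (η * L) * ∑ a, hpit a * |x a| := by rw [← Finset.mul_sum]
  -- lower bound
  have hlow : -Real.log S ≤ Real.exp (η * L) * ∑ a, hpit a * |x a| := by
    have h1 : -Real.log S ≤ S⁻¹ - 1 := by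
      rw [← Real.log_inv]
      exact Real.log_le_sub_one_of_pos (inv_pos.mpr hSpos)
    have hSinv : S⁻¹ ≤ Real.exp (η * L) := by
      have := inv_anti₀ (Real.exp_pos (-(η * L))) hSlow
      rwa [← Real.exp_neg, neg_neg] at this
    have h2 : 1 - S ≤ ∑ a, hpit a * |x a| := by
      have h2' : 1 - S = ∑ a, hpit a * (1 - Real.exp (x a)) := by
        simp [hSdef, mul_sub, Finset.sum_sub_distrib, hsum1]
      rw [h2']
      apply Finset.sum_le_sum
      intro a _
      apply mul_le_mul_of_nonneg_left _ (hpos a)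
      have := Real.add_one_le_exp (x a)
      have := neg_abs_le (x a)
      linarith
    rcases le_or_gt 1 S with h | h
    · have : S⁻¹ - 1 ≤ 0 := by
        have : S⁻¹ ≤ 1 := inv_le_one_of_one_le₀ h
        linarith
      exact le_trans h1 (le_trans this (mul_nonneg hexpnn.le hsumnn))
    · have hS1 : 0 ≤ 1 - S := by linarith
      calc -Real.log S ≤ S⁻¹ - 1 := h1
        _ = (1 - S) * S⁻¹ := by field_simp
        _ ≤ (1 - S) * Real.exp (η * L) := mul_le_mul_of_nonneg_left hSinv hS1
        _ ≤ (∑ a, hpit a * |x a|) * Real.exp (η * L) :=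
            mul_le_mul_of_nonneg_right h2 hexpnn.le
        _ = Real.exp (η * L) * ∑ a, hpit a * |x a| := by ring
  have hfin : Real.exp (η * L) * (∑ a, hpit a * |x a|) ≤
      Real.exp (η * L) * ((Fintype.card A : ℝ) * Khat) :=
    mul_le_mul_of_nonneg_left hsumK hexpnn.le
  rw [hM]
  have hMS : Real.log (∑ a, hpit a * Real.exp (η * P.mulVec piT a)) = Real.log S := rfl
  rw [hMS, abs_le, mul_assoc]
  constructor
  · linarith
  · linarith
end

section
/- In OMWU dynamics, ‖π̂^(t+1) − π̂^(t)‖₁ ≤ (e^{2ηL} − 1)(e^{ηL} + 1)|A| K̂^(t+1) / (2ηL), where K̂^(t+1) = max_a π̂^(t)_a |η(Pπ^(t))_a|. -/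
open Matrix

/-- Convexity bound: for `|x| ≤ s`, `|exp x - 1| ≤ |x| * (exp s - 1) / s`. -/
lemma exp_sub_one_abs_le {x s : ℝ} (hs : 0 < s) (hxs : |x| ≤ s) :
    |Real.exp x - 1| ≤ |x| * (Real.exp s - 1) / s := by
  have hes : s + 1 ≤ Real.exp s := Real.add_one_le_exp s
  rcases le_or_gt x 0 with h | h
  · have h1 : Real.exp x ≤ 1 := Real.exp_le_one_iff.mpr h
    have h2 : x + 1 ≤ Real.exp x := Real.add_one_le_exp x
    rw [abs_of_nonpos (by linarith), abs_of_nonpos h, le_div_iff₀ hs]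
    nlinarith [mul_nonneg (neg_nonneg.2 h) (by linarith : (0:ℝ) ≤ Real.exp s - 1 - s),
      mul_le_mul_of_nonneg_right (by linarith : 1 - Real.exp x ≤ -x) hs.le]
  · have hx0 : 0 ≤ x := h.le
    have hxs' : x ≤ s := (abs_le.mp hxs).2
    have ha : (0:ℝ) ≤ 1 - x / s := by
      have : x / s ≤ 1 := (div_le_one hs).mpr hxs'
      linarith
    have hconv := convexOn_exp.2 (Set.mem_univ (0:ℝ)) (Set.mem_univ s)
      ha (div_nonneg hx0 hs.le) (by ring)
    simp only [smul_eq_mul, mul_zero, zero_add, Real.exp_zero] at hconv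
    rw [div_mul_cancel₀ _ hs.ne'] at hconv
    have h1 : 1 ≤ Real.exp x := Real.one_le_exp hx0
    rw [abs_of_nonneg hx0, abs_of_nonneg (by linarith)]
    have hgoal : Real.exp x - 1 ≤ x / s * (Real.exp s - 1) := by nlinarith [hconv]
    have : x / s * (Real.exp s - 1) = x * (Real.exp s - 1) / s := by ring
    linarith

theorem stmt_13 {A : Type*} [Fintype A] [Nonempty A]
    (P : Matrix A A ℝ) (hP : P + Pᵀ = 0) (η L : ℝ) (hη : 0 < η) (hLpos : 0 < L)
    (hL : L = Finset.univ.sup' Finset.univ_nonempty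
      (fun ab : A × A => |P ab.1 ab.2|))
    (hpit hpit' piT : A → ℝ)
    (hhpidist : (∀ a, 0 ≤ hpit a) ∧ ∑ a, hpit a = 1)
    (hhpidist' : (∀ a, 0 ≤ hpit' a) ∧ ∑ a, hpit' a = 1)
    (hpidist : (∀ a, 0 ≤ piT a) ∧ ∑ a, piT a = 1)
    (Mhat Khat : ℝ)
    (hupd : ∀ a, hpit' a = hpit a * Real.exp (η * P.mulVec piT a - Mhat))
    (hK : Khat = Finset.univ.sup' Finset.univ_nonempty
      (fun a => hpit a * |η * P.mulVec piT a|)) :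
    (∑ a, |hpit' a - hpit a|) ≤
      (Real.exp (2 * η * L) - 1) * (Real.exp (η * L) + 1) *
        (Fintype.card A : ℝ) * Khat / (2 * η * L) := by
  obtain ⟨hpnn, hpsum⟩ := hhpidist
  obtain ⟨hpnn', hpsum'⟩ := hhpidist'
  obtain ⟨hqnn, hqsum⟩ := hpidist
  set s := η * L with hsdef
  have hs0 : 0 < s := mul_pos hη hLpos
  set x : A → ℝ := fun a => η * P.mulVec piT a with hxdef
  have ht1 : 1 ≤ Real.exp s := Real.one_le_exp hs0.le
  -- entrywise bound on P
  have hPb : ∀ a b, |P a b| ≤ L := by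
    intro a b
    rw [hL]
    exact Finset.le_sup' (fun ab : A × A => |P ab.1 ab.2|) (Finset.mem_univ (a, b))
  -- |x a| ≤ s
  have hx : ∀ a, |x a| ≤ s := by
    intro a
    have hmv : |P.mulVec piT a| ≤ L := by
      have h1 : |∑ b, P a b * piT b| ≤ ∑ b, |P a b * piT b| :=
        Finset.abs_sum_le_sum_abs _ _
      have h2 : ∑ b, |P a b * piT b| ≤ ∑ b, L * piT b := by
        apply Finset.sum_le_sum
        intro b _
        rw [abs_mul, abs_of_nonneg (hqnn b)]
        exact mul_le_mul_of_nonneg_right (hPb a b) (hqnn b)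
      have h3 : ∑ b, L * piT b = L := by
        rw [← Finset.mul_sum, hqsum, mul_one]
      simpa [Matrix.mulVec, dotProduct, h3] using h1.trans h2
    rw [hxdef]
    simp only [abs_mul, abs_of_pos hη, hsdef]
    exact mul_le_mul_of_nonneg_left hmv hη.le
  -- K̂ bounds
  have hKb : ∀ a, hpit a * |x a| ≤ Khat := by
    intro a
    rw [hK]
    exact Finset.le_sup' (fun a => hpit a * |η * P.mulVec piT a|) (Finset.mem_univ a)
  have hKnn : 0 ≤ Khat := by
    obtain ⟨a⟩ := ‹Nonempty A›
    exact le_trans (mul_nonneg (hpnn a) (abs_nonneg _)) (hKb a)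
  -- the key sum bound B := ∑ π̂_a |e^{x_a} - 1|
  have hB : ∑ a, hpit a * |Real.exp (x a) - 1| ≤
      (Fintype.card A : ℝ) * (Khat * (Real.exp s - 1) / s) := by
    have h1 : ∀ a ∈ (Finset.univ : Finset A),
        hpit a * |Real.exp (x a) - 1| ≤ Khat * (Real.exp s - 1) / s := by
      intro a _
      have hkey := exp_sub_one_abs_le hs0 (hx a)
      have h2 : hpit a * |Real.exp (x a) - 1| ≤ hpit a * (|x a| * (Real.exp s - 1) / s) :=
        mul_le_mul_of_nonneg_left hkey (hpnn a)
      have hnn : 0 ≤ (Real.exp s - 1) / s := div_nonneg (by linarith) hs0.le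
      calc hpit a * |Real.exp (x a) - 1|
          ≤ hpit a * |x a| * ((Real.exp s - 1) / s) := by
            rw [mul_assoc, ← mul_div_assoc]; exact h2
        _ ≤ Khat * ((Real.exp s - 1) / s) :=
            mul_le_mul_of_nonneg_right (hKb a) hnn
        _ = Khat * (Real.exp s - 1) / s := by ring
    calc ∑ a, hpit a * |Real.exp (x a) - 1|
        ≤ ∑ _a : A, Khat * (Real.exp s - 1) / s := Finset.sum_le_sum h1
      _ = (Fintype.card A : ℝ) * (Khat * (Real.exp s - 1) / s) := by
          rw [Finset.sum_const, Finset.card_univ, nsmul_eq_mul, mul_div_assoc]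
  -- normalization: exp Mhat = ∑ π̂_a e^{x_a}
  have hnorm : Real.exp Mhat = ∑ a, hpit a * Real.exp (x a) := by
    have h1 : (1 : ℝ) = (Real.exp Mhat)⁻¹ * ∑ a, hpit a * Real.exp (x a) := by
      rw [← hpsum', Finset.mul_sum]
      apply Finset.sum_congr rfl
      intro a _
      rw [hupd a, Real.exp_sub]
      ring
    have he : Real.exp Mhat ≠ 0 := Real.exp_ne_zero _
    field_simp at h1
    linarith [h1]
  -- Mhat ≥ -s
  have hM : Real.exp (-Mhat) ≤ Real.exp s := by
    have h1 : Real.exp (-s) ≤ Real.exp Mhat := by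
      rw [hnorm]
      calc Real.exp (-s) = ∑ a, hpit a * Real.exp (-s) := by
            rw [← Finset.sum_mul, hpsum, one_mul]
        _ ≤ ∑ a, hpit a * Real.exp (x a) := by
            apply Finset.sum_le_sum
            intro a _
            exact mul_le_mul_of_nonneg_left
              (Real.exp_le_exp.mpr (neg_le_of_abs_le (hx a))) (hpnn a)
    rw [Real.exp_le_exp]
    linarith [Real.exp_le_exp.mp h1]
  have hBnn : 0 ≤ ∑ a, hpit a * |Real.exp (x a) - 1| :=
    Finset.sum_nonneg fun a _ => mul_nonneg (hpnn a) (abs_nonneg _)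
  -- main estimate
  have hmain : ∑ a, |hpit' a - hpit a| ≤
      Real.exp s * (∑ a, hpit a * |Real.exp (x a) - 1|) +
      Real.exp s * (∑ a, hpit a * |Real.exp (x a) - 1|) := by
    have hterm : ∀ a, |hpit' a - hpit a| ≤
        Real.exp (-Mhat) * (hpit a * |Real.exp (x a) - 1|) +
        hpit a * |Real.exp (-Mhat) - 1| := by
      intro a
      rw [hupd a, Real.exp_sub, Real.exp_neg]
      have hsplit : hpit a * (Real.exp (x a) / Real.exp Mhat) - hpit a =
          (Real.exp Mhat)⁻¹ * (hpit a * (Real.exp (x a) - 1)) +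
          hpit a * ((Real.exp Mhat)⁻¹ - 1) := by
        field_simp
        ring
      rw [hsplit]
      calc |(Real.exp Mhat)⁻¹ * (hpit a * (Real.exp (x a) - 1)) +
          hpit a * ((Real.exp Mhat)⁻¹ - 1)|
          ≤ |(Real.exp Mhat)⁻¹ * (hpit a * (Real.exp (x a) - 1))| +
            |hpit a * ((Real.exp Mhat)⁻¹ - 1)| := abs_add_le _ _
        _ = (Real.exp Mhat)⁻¹ * (hpit a * |Real.exp (x a) - 1|) +
            hpit a * |(Real.exp Mhat)⁻¹ - 1| := by
            rw [abs_mul, abs_mul, abs_mul, abs_of_nonneg (hpnn a),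
              abs_of_nonneg (inv_nonneg.mpr (Real.exp_pos _).le)]
    have hMsmall : |Real.exp (-Mhat) - 1| ≤
        Real.exp (-Mhat) * ∑ a, hpit a * |Real.exp (x a) - 1| := by
      have h1 : Real.exp (-Mhat) - 1 =
          Real.exp (-Mhat) * (1 - Real.exp Mhat) := by
        rw [Real.exp_neg]
        field_simp
      have h2 : 1 - Real.exp Mhat = ∑ a, hpit a * (1 - Real.exp (x a)) := by
        calc 1 - Real.exp Mhat
            = (∑ a, hpit a) - ∑ a, hpit a * Real.exp (x a) := by rw [hpsum, hnorm]
          _ = ∑ a, hpit a * (1 - Real.exp (x a)) := by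
              rw [← Finset.sum_sub_distrib]
              apply Finset.sum_congr rfl
              intros; ring
      rw [h1, abs_mul, abs_of_nonneg (Real.exp_pos _).le, h2]
      apply mul_le_mul_of_nonneg_left _ (Real.exp_pos _).le
      calc |∑ a, hpit a * (1 - Real.exp (x a))|
          ≤ ∑ a, |hpit a * (1 - Real.exp (x a))| := Finset.abs_sum_le_sum_abs _ _
        _ = ∑ a, hpit a * |Real.exp (x a) - 1| := by
            apply Finset.sum_congr rfl
            intro a _
            rw [abs_mul, abs_of_nonneg (hpnn a), abs_sub_comm]
    calc ∑ a, |hpit' a - hpit a|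
        ≤ ∑ a, (Real.exp (-Mhat) * (hpit a * |Real.exp (x a) - 1|) +
          hpit a * |Real.exp (-Mhat) - 1|) :=
          Finset.sum_le_sum fun a _ => hterm a
      _ = Real.exp (-Mhat) * (∑ a, hpit a * |Real.exp (x a) - 1|) +
          |Real.exp (-Mhat) - 1| := by
          rw [Finset.sum_add_distrib, ← Finset.mul_sum, ← Finset.sum_mul, hpsum, one_mul]
      _ ≤ Real.exp (-Mhat) * (∑ a, hpit a * |Real.exp (x a) - 1|) +
          Real.exp (-Mhat) * (∑ a, hpit a * |Real.exp (x a) - 1|) := by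
          linarith [hMsmall]
      _ ≤ Real.exp s * (∑ a, hpit a * |Real.exp (x a) - 1|) +
          Real.exp s * (∑ a, hpit a * |Real.exp (x a) - 1|) := by
          have h := mul_le_mul_of_nonneg_right hM hBnn
          linarith
  -- combine
  have hfinal : ∑ a, |hpit' a - hpit a| ≤
      2 * Real.exp s * ((Fintype.card A : ℝ) * (Khat * (Real.exp s - 1) / s)) := by
    calc ∑ a, |hpit' a - hpit a|
        ≤ Real.exp s * (∑ a, hpit a * |Real.exp (x a) - 1|) +
          Real.exp s * (∑ a, hpit a * |Real.exp (x a) - 1|) := hmain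
      _ = 2 * Real.exp s * (∑ a, hpit a * |Real.exp (x a) - 1|) := by ring
      _ ≤ 2 * Real.exp s * ((Fintype.card A : ℝ) * (Khat * (Real.exp s - 1) / s)) := by
          apply mul_le_mul_of_nonneg_left hB
          positivity
  -- final algebraic step
  have h2s : Real.exp (2 * η * L) = Real.exp s * Real.exp s := by
    rw [← Real.exp_add, hsdef]; ring_nf
  have hck : (0:ℝ) ≤ (Fintype.card A : ℝ) * Khat :=
    mul_nonneg (Nat.cast_nonneg _) hKnn
  have hrew : 2 * Real.exp s * ((Fintype.card A : ℝ) * (Khat * (Real.exp s - 1) / s))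
      = (4 * Real.exp s * (Real.exp s - 1)) * ((Fintype.card A : ℝ) * Khat) / (2 * s) := by
    field_simp
    ring
  refine hfinal.trans ?_
  rw [hrew, h2s, show 2 * η * L = 2 * s by rw [hsdef]; ring]
  set t := Real.exp s with htdef
  have hkey : 4 * t * (t - 1) ≤ (t * t - 1) * (t + 1) := by
    nlinarith [mul_nonneg (mul_nonneg (sub_nonneg.2 ht1) (sub_nonneg.2 ht1)) (sub_nonneg.2 ht1)]
  have hXY : (4 * t * (t - 1)) * ((Fintype.card A : ℝ) * Khat) ≤
      ((t * t - 1) * (t + 1)) * ((Fintype.card A : ℝ) * Khat) :=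
    mul_le_mul_of_nonneg_right hkey hck
  rw [div_le_div_iff₀ (by linarith) (by linarith)]
  nlinarith [mul_le_mul_of_nonneg_right hXY (by linarith : (0:ℝ) ≤ 2 * s)]
end

section
/- Let π* and π be probability distributions on a finite set A with π_a > 0 for all a, and let ε = min_a π*_a. Then ε · ‖log π* − log π‖₁ ≤ D_KL(π* ∥ π) + 2e^{−1}. -/
lemma log_le_div_e {t : ℝ} (ht : 0 < t) : Real.log t ≤ t * Real.exp (-1) := by
  have h1 : 0 < t * Real.exp (-1) := by positivity
  have h2 := Real.log_le_sub_one_of_pos h1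
  rw [Real.log_mul (ne_of_gt ht) (by positivity), Real.log_exp] at h2
  linarith

lemma mul_log_le {x y : ℝ} (hx : 0 ≤ x) (hy : 0 < y) :
    x * Real.log (y / x) ≤ y * Real.exp (-1) := by
  rcases eq_or_lt_of_le hx with h | h
  · simp [← h]
    positivity
  · have hyx : 0 < y / x := div_pos hy h
    have h2 := log_le_div_e hyx
    calc x * Real.log (y / x) ≤ x * ((y / x) * Real.exp (-1)) :=
          mul_le_mul_of_nonneg_left h2 hx
      _ = y * Real.exp (-1) := by field_simp

theorem stmt_14 {A : Type*} [Fintype A] [Nonempty A]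
    (piStar pi : A → ℝ)
    (hstar : (∀ a, 0 ≤ piStar a) ∧ ∑ a, piStar a = 1)
    (hpisum : ∑ a, pi a = 1) (hpipos : ∀ a, 0 < pi a)
    (ε : ℝ) (hε : ε = Finset.univ.inf' Finset.univ_nonempty piStar) :
    ε * ∑ a, |Real.log (piStar a) - Real.log (pi a)| ≤
      (∑ a, piStar a * Real.log (piStar a / pi a)) + 2 * Real.exp (-1) := by
  obtain ⟨hpos, hsum⟩ := hstar
  have hεle : ∀ a, ε ≤ piStar a := by
    intro a
    rw [hε]
    exact Finset.inf'_le _ (Finset.mem_univ a)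
  have hε0 : 0 ≤ ε := by
    rw [hε]
    exact Finset.le_inf' _ _ fun a _ => hpos a
  have gibbs : 0 ≤ ∑ a, piStar a * Real.log (piStar a / pi a) := by
    have h1 : ∀ a, piStar a - pi a ≤ piStar a * Real.log (piStar a / pi a) := by
      intro a
      rcases eq_or_lt_of_le (hpos a) with h | h
      · simp [← h]; linarith [(hpipos a).le]
      · have hd : 0 < pi a / piStar a := div_pos (hpipos a) h
        have h2 := Real.log_le_sub_one_of_pos hd
        have hlog : Real.log (pi a / piStar a) = - Real.log (piStar a / pi a) := by
          rw [← Real.log_inv]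
          congr 1
          field_simp
        rw [hlog] at h2
        have h3 : piStar a * (- Real.log (piStar a / pi a)) ≤
            piStar a * (pi a / piStar a - 1) := mul_le_mul_of_nonneg_left h2 h.le
        have h4 : piStar a * (pi a / piStar a - 1) = pi a - piStar a := by
          field_simp
        nlinarith
    calc (0:ℝ) = ∑ a, (piStar a - pi a) := by
          rw [Finset.sum_sub_distrib, hsum, hpisum]; ring
      _ ≤ _ := Finset.sum_le_sum fun a _ => h1 a
  rcases eq_or_lt_of_le hε0 with h0 | h0
  · have : ε * ∑ a, |Real.log (piStar a) - Real.log (pi a)| = 0 := by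
      rw [← h0]; ring
    rw [this]
    have := Real.exp_pos (-1)
    linarith
  · -- all piStar positive
    have hps : ∀ a, 0 < piStar a := fun a => lt_of_lt_of_le h0 (hεle a)
    have key : ∀ a, ε * |Real.log (piStar a) - Real.log (pi a)| ≤
        piStar a * Real.log (piStar a / pi a) + 2 * (pi a * Real.exp (-1)) := by
      intro a
      have hld : Real.log (piStar a) - Real.log (pi a) = Real.log (piStar a / pi a) := by
        rw [Real.log_div (ne_of_gt (hps a)) (ne_of_gt (hpipos a))]
      set L := Real.log (piStar a / pi a) with hL
      rw [hld]
      have hkey : piStar a * Real.log (pi a / piStar a) ≤ pi a * Real.exp (-1) :=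
        mul_log_le (hps a).le (hpipos a)
      have hneg : Real.log (pi a / piStar a) = -L := by
        rw [hL, ← Real.log_inv]
        congr 1
        field_simp
      rw [hneg] at hkey
      have hεp : ε ≤ piStar a := hεle a
      rcases le_or_gt 0 L with hl | hl
      · rw [abs_of_nonneg hl]
        have h1 : ε * L ≤ piStar a * L := mul_le_mul_of_nonneg_right hεp hl
        have h2 : 0 ≤ pi a * Real.exp (-1) := mul_nonneg (hpipos a).le (Real.exp_pos _).le
        linarith
      · rw [abs_of_neg hl]
        have h1 : ε * (-L) ≤ piStar a * (-L) :=
          mul_le_mul_of_nonneg_right hεp (by linarith)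
        nlinarith
    calc ε * ∑ a, |Real.log (piStar a) - Real.log (pi a)|
        = ∑ a, ε * |Real.log (piStar a) - Real.log (pi a)| := Finset.mul_sum _ _ _
      _ ≤ ∑ a, (piStar a * Real.log (piStar a / pi a) + 2 * (pi a * Real.exp (-1))) :=
          Finset.sum_le_sum fun a _ => key a
      _ = (∑ a, piStar a * Real.log (piStar a / pi a)) + 2 * Real.exp (-1) := by
          rw [Finset.sum_add_distrib]
          congr 1
          rw [← Finset.mul_sum, ← Finset.sum_mul, hpisum, one_mul]
end

section
/- For any probability distributions π*, π on a finite set A, Σ_{a : π*_a < π_a} π*_a log(π_a/π*_a) ≤ e^{−1}. -/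
open Real Finset

/-- `t / e` is the tangent line to `log` at `e`. -/
lemma Real.log_le_mul_exp_neg_one {t : ℝ} (ht : 0 < t) : log t ≤ t * exp (-1) := by
  have h := log_le_sub_one_of_pos (mul_pos ht (exp_pos (-1)))
  rw [log_mul ht.ne' (exp_pos _).ne', log_exp] at h
  linarith

lemma Real.mul_log_div_le_mul_exp_neg_one {x y : ℝ} (hx : 0 ≤ x) (hy : 0 ≤ y) :
    x * log (y / x) ≤ y * exp (-1) := by
  rcases hx.eq_or_lt with rfl | hx
  · simpa using mul_nonneg hy (exp_pos (-1)).le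
  rcases hy.eq_or_lt with rfl | hy
  · simp
  calc x * log (y / x) ≤ x * (y / x * exp (-1)) :=
        mul_le_mul_of_nonneg_left (log_le_mul_exp_neg_one (div_pos hy hx)) hx.le
    _ = y * exp (-1) := by field_simp

theorem stmt_15 {A : Type*} [Fintype A]
    (piStar pi : A → ℝ)
    (hstar : (∀ a, 0 ≤ piStar a) ∧ ∑ a, piStar a = 1)
    (hpi : (∀ a, 0 ≤ pi a) ∧ ∑ a, pi a = 1) :
    ∑ a ∈ Finset.univ.filter (fun a => piStar a < pi a),
        piStar a * Real.log (pi a / piStar a) ≤ Real.exp (-1) := by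
  obtain ⟨hpi_nonneg, hpi_sum⟩ := hpi
  calc ∑ a ∈ univ.filter (fun a => piStar a < pi a), piStar a * log (pi a / piStar a)
      ≤ ∑ a ∈ univ.filter (fun a => piStar a < pi a), pi a * exp (-1) :=
        sum_le_sum fun a _ => mul_log_div_le_mul_exp_neg_one (hstar.1 a) (hpi_nonneg a)
    _ ≤ ∑ a, pi a * exp (-1) :=
        sum_le_sum_of_subset_of_nonneg (filter_subset _ _)
          fun a _ _ => mul_nonneg (hpi_nonneg a) (exp_pos (-1)).le
    _ = exp (-1) := by rw [← sum_mul, hpi_sum, one_mul]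
end

section
/- Let π* and π be probability distributions on a finite set A, and let ε = min_a π*_a > 0. Then ‖π* − π‖₁ ≥ 2ε√(1 − exp(−D_KL(π* ∥ π)/ε)). -/
/-!
Let `δ = ‖π* - π‖₁` and `s = δ / (2ε)`; the case `δ ≥ 2ε` is trivial. Since `π*` and `π` have
equal mass, `|π_a - π*_a| ≤ δ / 2 ≤ s π*_a`, so `π_a / π*_a = 1 + u_a` with `|u_a| ≤ s`. By
concavity, `log (1 + u)` lies above its piecewise-linear interpolant at `-s, 0, s`, which has the
form `α u + β |u|` with `2sβ = log (1 - s²)`. Weighted by `π*`, the linear part sums to `0` and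
`∑ π*_a |u_a| = δ`, so `D_KL(π* ∥ π) ≤ -ε log (1 - s²)`, which rearranges to the claim.
If `π_a = 0`, then `ε ≤ π*_a = |π*_a - π_a| ≤ δ / 2` directly.
-/

open Finset Real

theorem two_mul_abs_le_sum_abs_of_sum_eq_zero {ι : Type*} [Fintype ι] {f : ι → ℝ}
    (hf : ∑ i, f i = 0) (i : ι) : 2 * |f i| ≤ ∑ j, |f j| := by
  classical
  have hrest : ∑ j ∈ univ.erase i, f j = -f i := by
    rw [← add_sum_erase univ f (mem_univ i)] at hf
    linarith
  calc 2 * |f i| = |f i| + |∑ j ∈ univ.erase i, f j| := by rw [hrest, abs_neg]; ring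
    _ ≤ |f i| + ∑ j ∈ univ.erase i, |f j| := by gcongr; exact abs_sum_le_sum_abs _ _
    _ = ∑ j, |f j| := add_sum_erase _ (fun j ↦ |f j|) (mem_univ i)

theorem ConcaveOn.mul_sub_le_sub {S : Set ℝ} {f : ℝ → ℝ} (hf : ConcaveOn ℝ S f) {c h t : ℝ}
    (hc : c ∈ S) (hh : c + h ∈ S) (ht₀ : 0 ≤ t) (ht₁ : t ≤ 1) :
    t * (f (c + h) - f c) ≤ f (c + t * h) - f c := by
  have key := hf.2 hc hh (sub_nonneg.2 ht₁) ht₀ (sub_add_cancel 1 t)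
  simp only [smul_eq_mul] at key
  rw [show (1 - t) * c + t * (c + h) = c + t * h by ring] at key
  linarith

/-- The left side is `2r` times the piecewise-linear interpolant of `f` at `c - r, c, c + r`. -/
theorem ConcaveOn.three_point_interpolation_le {S : Set ℝ} {f : ℝ → ℝ} (hf : ConcaveOn ℝ S f)
    {c r x : ℝ} (hl : c - r ∈ S) (hr : c + r ∈ S) (hx : |x - c| ≤ r) :
    2 * r * f c + (f (c + r) - f (c - r)) * (x - c) + (f (c + r) + f (c - r) - 2 * f c) * |x - c|
      ≤ 2 * r * f x := by
  have hc : c ∈ S := by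
    convert hf.1 hl hr (by norm_num : (0 : ℝ) ≤ 1 / 2) (by norm_num : (0 : ℝ) ≤ 1 / 2) (by norm_num)
      using 1
    simp only [smul_eq_mul]; ring
  rcases (abs_nonneg _ |>.trans hx).eq_or_lt with rfl | hr₀
  · obtain rfl : x = c := sub_eq_zero.1 (abs_nonpos_iff.1 hx)
    simp
  have ht₀ : 0 ≤ |x - c| / r := by positivity
  have ht₁ : |x - c| / r ≤ 1 := (div_le_one hr₀).2 hx
  have hrt : r * (|x - c| / r) = |x - c| := mul_div_cancel₀ _ hr₀.ne'
  generalize |x - c| / r = t at ht₀ ht₁ hrt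
  rcases le_total c x with hcx | hxc
  · have key := hf.mul_sub_le_sub hc hr ht₀ ht₁
    rw [abs_of_nonneg (sub_nonneg.2 hcx)] at hrt ⊢
    rw [show c + t * r = x by linarith] at key
    linear_combination (2 * r) * key - 2 * (f (c + r) - f c) * hrt
  · have key := hf.mul_sub_le_sub hc (by rwa [← sub_eq_add_neg]) ht₀ ht₁
    rw [abs_of_nonpos (sub_nonpos.2 hxc)] at hrt ⊢
    rw [show c + t * -r = x by linarith, ← sub_eq_add_neg] at key
    linear_combination (2 * r) * key - 2 * (f (c - r) - f c) * hrt

theorem two_mul_mul_log_div_le {p q s : ℝ} (hp : 0 < p) (hs : s < 1) (hpq : |q - p| ≤ s * p) :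
    2 * s * (p * log (p / q)) ≤
      (log (1 - s) - log (1 + s)) * (q - p) - log (1 - s ^ 2) * |p - q| := by
  have hs₀ : 0 ≤ s := nonneg_of_mul_nonneg_left ((abs_nonneg _).trans hpq) hp
  have hx : |q / p - 1| ≤ s := by
    rwa [div_sub_one hp.ne', abs_div, abs_of_pos hp, div_le_iff₀ hp]
  have key := strictConcaveOn_log_Ioi.concaveOn.three_point_interpolation_le
    (by simp only [Set.mem_Ioi]; linarith) (by simp only [Set.mem_Ioi]; linarith) hx
  rw [log_one, mul_zero, zero_add, mul_zero, sub_zero] at key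
  have hlog : log (1 - s ^ 2) = log (1 + s) + log (1 - s) := by
    rw [← log_mul (by linarith) (by linarith)]; ring_nf
  have hlin : p * (q / p - 1) = q - p := by field_simp
  have habs : p * |q / p - 1| = |p - q| := by
    rw [← abs_of_pos hp, ← abs_mul, abs_of_pos hp, hlin, abs_sub_comm]
  rw [← inv_div, log_inv, hlog, ← habs]
  linear_combination p * key - (log (1 + s) - log (1 - s)) * hlin

theorem two_mul_mul_sum_mul_log_div_le {ι : Type*} [Fintype ι] {p q : ι → ℝ} {s : ℝ}
    (hsum : ∑ i, p i = ∑ i, q i) (hp : ∀ i, 0 < p i) (hs : s < 1)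
    (hpq : ∀ i, |q i - p i| ≤ s * p i) :
    2 * s * ∑ i, p i * log (p i / q i) ≤ -log (1 - s ^ 2) * ∑ i, |p i - q i| := by
  have hbal : ∑ i, (q i - p i) = 0 := by rw [sum_sub_distrib, hsum, sub_self]
  calc 2 * s * ∑ i, p i * log (p i / q i)
      ≤ ∑ i, ((log (1 - s) - log (1 + s)) * (q i - p i) - log (1 - s ^ 2) * |p i - q i|) := by
        rw [mul_sum]
        exact sum_le_sum fun i _ ↦ two_mul_mul_log_div_le (hp i) hs (hpq i)
    _ = -log (1 - s ^ 2) * ∑ i, |p i - q i| := by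
        rw [sum_sub_distrib, ← mul_sum, ← mul_sum, hbal]; ring

theorem sum_mul_log_div_le_neg_mul_log_one_sub_sq {ι : Type*} [Fintype ι] {p q : ι → ℝ}
    {ε s : ℝ} (hsum : ∑ i, p i = ∑ i, q i) (hε : 0 < ε) (hpε : ∀ i, ε ≤ p i) (hs : s < 1)
    (hδ : ∑ i, |p i - q i| = 2 * ε * s) :
    ∑ i, p i * log (p i / q i) ≤ -ε * log (1 - s ^ 2) := by
  have hp i : 0 < p i := hε.trans_le (hpε i)
  have hs₀ : 0 ≤ s := by
    have : 0 ≤ 2 * ε * s := hδ ▸ sum_nonneg fun i _ ↦ abs_nonneg _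
    exact nonneg_of_mul_nonneg_right this (by positivity)
  have hpq {t : ℝ} (ht : s ≤ t) (i : ι) : |q i - p i| ≤ t * p i := by
    have hbal : ∑ i, (p i - q i) = 0 := by rw [sum_sub_distrib, hsum, sub_self]
    have := two_mul_abs_le_sum_abs_of_sum_eq_zero hbal i
    rw [abs_sub_comm]
    nlinarith [hpε i]
  rcases hs₀.eq_or_lt with rfl | hs₀
  -- with `p = q` every `t` is admissible, and `t = 1 / 2` yields `D ≤ 0`
  · have := two_mul_mul_sum_mul_log_div_le hsum hp (by norm_num : (1 / 2 : ℝ) < 1)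
      (hpq (by norm_num))
    rw [hδ] at this
    simpa using this
  · have := two_mul_mul_sum_mul_log_div_le hsum hp hs (hpq le_rfl)
    rw [hδ] at this
    refine le_of_mul_le_mul_left (a := 2 * s) ?_ (by positivity)
    linarith

theorem sqrt_one_sub_exp_neg_div_le {D ε s : ℝ} (hε : 0 < ε) (hs₀ : 0 ≤ s) (hs : s < 1)
    (hD : D ≤ -ε * log (1 - s ^ 2)) : √(1 - exp (-D / ε)) ≤ s := by
  have hpos : 0 < 1 - s ^ 2 := by nlinarith
  have hlog : log (1 - s ^ 2) ≤ -D / ε := by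
    rw [le_div_iff₀ hε]; linarith
  have hexp : 1 - s ^ 2 ≤ exp (-D / ε) := by
    simpa [exp_log hpos] using exp_le_exp.2 hlog
  calc √(1 - exp (-D / ε)) ≤ √(s ^ 2) := sqrt_le_sqrt (by linarith)
    _ = s := sqrt_sq hs₀

theorem two_mul_mul_sqrt_one_sub_exp_le_sum_abs_sub {ι : Type*} [Fintype ι] {p q : ι → ℝ}
    {ε : ℝ} (hsum : ∑ i, p i = ∑ i, q i) (hε : 0 < ε) (hpε : ∀ i, ε ≤ p i) :
    2 * ε * √(1 - exp (-(∑ i, p i * log (p i / q i)) / ε)) ≤ ∑ i, |p i - q i| := by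
  set δ := ∑ i, |p i - q i|
  rcases le_or_gt (2 * ε) δ with hfar | hnear
  · calc _ ≤ 2 * ε := mul_le_of_le_one_right (by positivity)
          (sqrt_le_one.2 (by linarith [exp_pos (-(∑ i, p i * log (p i / q i)) / ε)]))
      _ ≤ δ := hfar
  have hs : δ = 2 * ε * (δ / (2 * ε)) := by field_simp
  have hs₁ : δ / (2 * ε) < 1 := (div_lt_one (by positivity)).2 hnear
  calc _ ≤ 2 * ε * (δ / (2 * ε)) := by
        gcongr
        exact sqrt_one_sub_exp_neg_div_le hε (by positivity) hs₁
          (sum_mul_log_div_le_neg_mul_log_one_sub_sq hsum hε hpε hs₁ hs)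
    _ = δ := hs.symm

theorem stmt_17 {A : Type*} [Fintype A] [Nonempty A]
    (piStar pi : A → ℝ)
    (hstar : (∀ a, 0 ≤ piStar a) ∧ ∑ a, piStar a = 1)
    (hpi : (∀ a, 0 ≤ pi a) ∧ ∑ a, pi a = 1)
    (ε : ℝ) (hε : ε = Finset.univ.inf' Finset.univ_nonempty piStar)
    (hεpos : 0 < ε) :
    ((∀ a, 0 < pi a) →
      2 * ε * Real.sqrt (1 - Real.exp
        (-(∑ a, piStar a * Real.log (piStar a / pi a)) / ε)) ≤
        ∑ a, |piStar a - pi a|) ∧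
    ((∃ a, pi a = 0) → 2 * ε ≤ ∑ a, |piStar a - pi a|) := by
  have hεle a : ε ≤ piStar a := hε ▸ inf'_le _ (mem_univ a)
  have hsum : ∑ a, piStar a = ∑ a, pi a := hstar.2.trans hpi.2.symm
  refine ⟨fun _ ↦ two_mul_mul_sqrt_one_sub_exp_le_sum_abs_sub hsum hεpos hεle, ?_⟩
  rintro ⟨a, ha⟩
  calc 2 * ε ≤ 2 * |piStar a - pi a| := by
        rw [ha, sub_zero, abs_of_pos (hεpos.trans_le (hεle a))]; linarith [hεle a]
    _ ≤ ∑ a, |piStar a - pi a| := two_mul_abs_le_sum_abs_of_sum_eq_zero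
        (f := fun a ↦ piStar a - pi a) (by rw [sum_sub_distrib, hsum, sub_self]) a
end

section
/- In OMWU dynamics, the quantity max{K̂^(t+1), K^(t+1)} is bounded: max{K̂^(t+1), K^(t+1)} ≤ e^{2ηL}‖π̂^(t+1) − π̂^(t)‖₁ + ηL‖π̂^(t+1) − π^(t)‖₁, where K̂^(t+1) = max_a π̂^(t)_a|η(Pπ^(t))_a| and K^(t+1) = max_a π̂^(t+1)_a|η(Pπ^(t))_a|. -/
open Matrix

private lemma exp_abs_le1 {x s : ℝ} (hx : |x| ≤ s) : |x| ≤ Real.exp s * |Real.exp x - 1| := by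
  have hs0 : 0 ≤ s := le_trans (abs_nonneg x) hx
  rcases le_or_gt 0 x with h | h
  · have h1 : x ≤ Real.exp x - 1 := by linarith [Real.add_one_le_exp x]
    have h2 : 1 ≤ Real.exp s := by linarith [Real.add_one_le_exp s]
    rw [abs_of_nonneg h, abs_of_nonneg (by linarith : (0:ℝ) ≤ Real.exp x - 1)]
    nlinarith
  · have hx1 : -s ≤ x := (abs_le.mp hx).1
    have h1 : -x ≤ Real.exp (-x) - 1 := by linarith [Real.add_one_le_exp (-x)]
    have h2 : 1 ≤ Real.exp (s + x) := by linarith [Real.add_one_le_exp (s + x)]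
    have hex1 : Real.exp x ≤ 1 := by
      calc Real.exp x ≤ Real.exp 0 := Real.exp_le_exp.mpr h.le
        _ = 1 := Real.exp_zero
    rw [abs_of_neg h, abs_of_nonpos (by linarith : Real.exp x - 1 ≤ 0)]
    have h3 : Real.exp s * -(Real.exp x - 1) = Real.exp (s + x) * (Real.exp (-x) - 1) := by
      rw [Real.exp_add, Real.exp_neg]
      have := (Real.exp_pos x).ne'
      field_simp
      ring
    rw [h3]
    have h4 : (0:ℝ) ≤ Real.exp (-x) - 1 := by linarith
    have h5 : 1 * (Real.exp (-x) - 1) ≤ Real.exp (s + x) * (Real.exp (-x) - 1) :=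
      mul_le_mul_of_nonneg_right h2 h4
    linarith

private lemma exp_abs_le2 {x s : ℝ} (hx : |x| ≤ s) :
    Real.exp x * |x| ≤ Real.exp s * |Real.exp x - 1| := by
  rcases le_or_gt 0 x with h | h
  · have h1 : x ≤ Real.exp x - 1 := by linarith [Real.add_one_le_exp x]
    have h2 : Real.exp x ≤ Real.exp s := Real.exp_le_exp.mpr (le_trans (le_abs_self x) hx)
    rw [abs_of_nonneg h, abs_of_nonneg (by linarith : (0:ℝ) ≤ Real.exp x - 1)]
    have h3 : Real.exp x * x ≤ Real.exp s * x := mul_le_mul_of_nonneg_right h2 h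
    have h4 : Real.exp s * x ≤ Real.exp s * (Real.exp x - 1) :=
      mul_le_mul_of_nonneg_left h1 (Real.exp_nonneg s)
    linarith
  · have h1 : Real.exp x ≤ 1 := by
      calc Real.exp x ≤ Real.exp 0 := Real.exp_le_exp.mpr h.le
        _ = 1 := Real.exp_zero
    calc Real.exp x * |x| ≤ 1 * |x| := mul_le_mul_of_nonneg_right h1 (abs_nonneg x)
      _ = |x| := one_mul _
      _ ≤ Real.exp s * |Real.exp x - 1| := exp_abs_le1 hx

private lemma aux_key {A : Type*} [Fintype A] [Nonempty A]
    (p q r v : A → ℝ) (M s : ℝ)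
    (hs1 : 2 * s ≤ 1)
    (hq : ∀ a, 0 < q a) (hqs : ∑ a, q a = 1)
    (hr : ∀ a, 0 < r a) (hrs : ∑ a, r a = 1)
    (hp : ∀ a, 0 ≤ p a) (hps : ∑ a, p a = 1)
    (hv : ∀ a, |v a| ≤ s)
    (hz : ∑ a, p a * v a = 0)
    (hstep : ∀ a, r a = q a * Real.exp (v a - M)) :
    ∀ a, q a * |v a| ≤ Real.exp (2*s) * (∑ b, |r b - q b|) + s * (∑ b, |r b - p b|)
      ∧ r a * |v a| ≤ Real.exp (2*s) * (∑ b, |r b - q b|) + s * (∑ b, |r b - p b|) := by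
  classical
  have hs0 : 0 ≤ s := le_trans (abs_nonneg _) (hv (Classical.arbitrary A))
  have hqr : ∀ a, q a = r a * Real.exp (M - v a) := by
    intro a
    rw [hstep a, mul_assoc, ← Real.exp_add]
    rw [show v a - M + (M - v a) = 0 by ring, Real.exp_zero, mul_one]
  have hexpM : Real.exp M = ∑ a, q a * Real.exp (v a) := by
    have h1 : ∀ a, q a * Real.exp (v a) = r a * Real.exp M := by
      intro a
      rw [hstep a, mul_assoc, ← Real.exp_add]
      rw [show v a - M + M = v a by ring]
    have h2 : ∑ a, q a * Real.exp (v a) = ∑ a, r a * Real.exp M :=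
      Finset.sum_congr rfl (fun a _ => h1 a)
    rw [h2, ← Finset.sum_mul, hrs, one_mul]
  have hMle : M ≤ s := by
    apply Real.exp_le_exp.mp
    rw [hexpM]
    calc ∑ a, q a * Real.exp (v a) ≤ ∑ a, q a * Real.exp s := by
          apply Finset.sum_le_sum; intro a _
          exact mul_le_mul_of_nonneg_left
            (Real.exp_le_exp.mpr (le_trans (le_abs_self _) (hv a))) (hq a).le
      _ = Real.exp s := by rw [← Finset.sum_mul, hqs, one_mul]
  have hMge : -s ≤ M := by
    apply Real.exp_le_exp.mp
    rw [hexpM]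
    calc Real.exp (-s) = ∑ a, q a * Real.exp (-s) := by rw [← Finset.sum_mul, hqs, one_mul]
      _ ≤ ∑ a, q a * Real.exp (v a) := by
          apply Finset.sum_le_sum; intro a _
          exact mul_le_mul_of_nonneg_left
            (Real.exp_le_exp.mpr (neg_le_of_abs_le (hv a))) (hq a).le
  have hx2 : ∀ a, |v a - M| ≤ 2 * s := by
    intro a
    have h := abs_le.mp (hv a)
    rw [abs_le]
    constructor <;> linarith
  have hdelta : ∀ a, r a - q a = q a * (Real.exp (v a - M) - 1) := by
    intro a; rw [hstep a]; ring
  have key1 : ∀ a, q a * |v a - M| ≤ Real.exp (2*s) * |r a - q a| := by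
    intro a
    have h := exp_abs_le1 (hx2 a)
    rw [hdelta a, abs_mul, abs_of_pos (hq a)]
    calc q a * |v a - M| ≤ q a * (Real.exp (2*s) * |Real.exp (v a - M) - 1|) :=
          mul_le_mul_of_nonneg_left h (hq a).le
      _ = Real.exp (2*s) * (q a * |Real.exp (v a - M) - 1|) := by ring
  have key2 : ∀ a, r a * |v a - M| ≤ Real.exp (2*s) * |r a - q a| := by
    intro a
    have h := exp_abs_le2 (hx2 a)
    rw [hdelta a, abs_mul, abs_of_pos (hq a), hstep a]
    calc q a * Real.exp (v a - M) * |v a - M|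
        = q a * (Real.exp (v a - M) * |v a - M|) := by ring
      _ ≤ q a * (Real.exp (2*s) * |Real.exp (v a - M) - 1|) :=
          mul_le_mul_of_nonneg_left h (hq a).le
      _ = Real.exp (2*s) * (q a * |Real.exp (v a - M) - 1|) := by ring
  have hsum0 : ∑ b, (r b - q b) = 0 := by
    rw [Finset.sum_sub_distrib, hrs, hqs, sub_self]
  have half : ∀ a, |r a - q a| ≤ (∑ b, |r b - q b|) / 2 := by
    intro a
    have h1 : (r a - q a) + ∑ b ∈ Finset.univ.erase a, (r b - q b) = 0 := by
      rw [Finset.add_sum_erase Finset.univ (fun b => r b - q b) (Finset.mem_univ a)]; exact hsum0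
    have h2 : |r a - q a| + ∑ b ∈ Finset.univ.erase a, |r b - q b| = ∑ b, |r b - q b| :=
      Finset.add_sum_erase Finset.univ (fun b => |r b - q b|) (Finset.mem_univ a)
    have h3 : |r a - q a| = |∑ b ∈ Finset.univ.erase a, (r b - q b)| := by
      rw [show r a - q a = -∑ b ∈ Finset.univ.erase a, (r b - q b) by linarith, abs_neg]
    have h4 : |∑ b ∈ Finset.univ.erase a, (r b - q b)|
        ≤ ∑ b ∈ Finset.univ.erase a, |r b - q b| := Finset.abs_sum_le_sum_abs _ _
    linarith
  have hc : |∑ b, r b * v b| ≤ s * ∑ b, |r b - p b| := by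
    have h1 : ∑ b, r b * v b = ∑ b, (r b - p b) * v b := by
      have h : ∑ b, (r b - p b) * v b = ∑ b, r b * v b - ∑ b, p b * v b := by
        rw [← Finset.sum_sub_distrib]
        exact Finset.sum_congr rfl (fun b _ => by ring)
      rw [h, hz, sub_zero]
    rw [h1]
    calc |∑ b, (r b - p b) * v b| ≤ ∑ b, |(r b - p b) * v b| := Finset.abs_sum_le_sum_abs _ _
      _ ≤ ∑ b, |r b - p b| * s := by
          apply Finset.sum_le_sum; intro b _
          rw [abs_mul]
          exact mul_le_mul_of_nonneg_left (hv b) (abs_nonneg _)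
      _ = s * ∑ b, |r b - p b| := by rw [← Finset.sum_mul]; ring
  have hMc1 : M ≤ ∑ b, r b * v b := by
    have h : ∀ b, r b * (M - v b) ≤ q b - r b := by
      intro b
      have h1 : (M - v b) + 1 ≤ Real.exp (M - v b) := Real.add_one_le_exp _
      have h2 : r b * ((M - v b) + 1) ≤ r b * Real.exp (M - v b) :=
        mul_le_mul_of_nonneg_left h1 (hr b).le
      have h3 : r b * Real.exp (M - v b) = q b := (hqr b).symm
      rw [mul_add, mul_one] at h2
      linarith
    have hsum := Finset.sum_le_sum (fun b (_ : b ∈ Finset.univ) => h b)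
    have e1 : ∑ b, r b * (M - v b) = M - ∑ b, r b * v b := by
      have h' : ∑ b, r b * (M - v b) = ∑ b, (r b * M - r b * v b) :=
        Finset.sum_congr rfl (fun b _ => by ring)
      rw [h', Finset.sum_sub_distrib, ← Finset.sum_mul, hrs, one_mul]
    have e2 : ∑ b, (q b - r b) = 0 := by rw [Finset.sum_sub_distrib, hqs, hrs, sub_self]
    rw [e1, e2] at hsum
    linarith
  have hMc2 : (∑ b, r b * v b) - M ≤ 2*s * ∑ b, |r b - q b| := by
    have h : ∀ b, q b * (v b - M) ≤ r b - q b := by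
      intro b
      have h1 : (v b - M) + 1 ≤ Real.exp (v b - M) := Real.add_one_le_exp _
      have h2 : q b * ((v b - M) + 1) ≤ q b * Real.exp (v b - M) :=
        mul_le_mul_of_nonneg_left h1 (hq b).le
      have h3 : q b * Real.exp (v b - M) = r b := (hstep b).symm
      rw [mul_add, mul_one] at h2
      linarith
    have hq0 : ∑ b, q b * (v b - M) ≤ 0 := by
      have hsum := Finset.sum_le_sum (fun b (_ : b ∈ Finset.univ) => h b)
      rw [hsum0] at hsum
      exact hsum
    have e1 : (∑ b, r b * v b) - M = ∑ b, r b * (v b - M) := by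
      have h' : ∑ b, r b * (v b - M) = ∑ b, (r b * v b - r b * M) :=
        Finset.sum_congr rfl (fun b _ => by ring)
      rw [h', Finset.sum_sub_distrib, ← Finset.sum_mul, hrs, one_mul]
    have e3 : ∀ b, (r b - q b) * (v b - M) ≤ |r b - q b| * (2*s) := by
      intro b
      calc (r b - q b) * (v b - M) ≤ |(r b - q b) * (v b - M)| := le_abs_self _
        _ = |r b - q b| * |v b - M| := abs_mul _ _
        _ ≤ |r b - q b| * (2*s) := mul_le_mul_of_nonneg_left (hx2 b) (abs_nonneg _)
    calc (∑ b, r b * v b) - M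
        = (∑ b, (r b - q b) * (v b - M)) + ∑ b, q b * (v b - M) := by
          rw [e1, ← Finset.sum_add_distrib]
          exact Finset.sum_congr rfl (fun b _ => by ring)
      _ ≤ (∑ b, |r b - q b| * (2*s)) + 0 :=
          add_le_add (Finset.sum_le_sum (fun b _ => e3 b)) hq0
      _ = 2*s * ∑ b, |r b - q b| := by rw [add_zero, ← Finset.sum_mul]; ring
  have hΔ0 : 0 ≤ ∑ b, |r b - q b| := Finset.sum_nonneg fun b _ => abs_nonneg _
  have hD0 : 0 ≤ ∑ b, |r b - p b| := Finset.sum_nonneg fun b _ => abs_nonneg _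
  have hM : |M| ≤ 2*s * (∑ b, |r b - q b|) + s * (∑ b, |r b - p b|) := by
    rw [abs_le]
    constructor
    · have hn := neg_abs_le (∑ b, r b * v b)
      linarith
    · have hl := le_abs_self (∑ b, r b * v b)
      have h2 : (0:ℝ) ≤ 2*s * ∑ b, |r b - q b| := by positivity
      linarith
  have hq1 : ∀ a, q a ≤ 1 := by
    intro a; rw [← hqs]
    exact Finset.single_le_sum (fun b _ => (hq b).le) (Finset.mem_univ a)
  have hr1 : ∀ a, r a ≤ 1 := by
    intro a; rw [← hrs]
    exact Finset.single_le_sum (fun b _ => (hr b).le) (Finset.mem_univ a)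
  have coeff : Real.exp (2*s) / 2 + 2*s ≤ Real.exp (2*s) := by
    have := Real.add_one_le_exp (2*s)
    linarith
  have dist : Real.exp (2*s)/2 * (∑ b, |r b - q b|) + 2*s*(∑ b, |r b - q b|)
      ≤ Real.exp (2*s) * (∑ b, |r b - q b|) := by nlinarith
  intro a
  have tri : |v a| ≤ |v a - M| + |M| := by
    calc |v a| = |(v a - M) + M| := by rw [sub_add_cancel]
      _ ≤ |v a - M| + |M| := abs_add_le _ _
  constructor
  · have step1 : q a * |v a - M| ≤ Real.exp (2*s) * ((∑ b, |r b - q b|)/2) := by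
      calc q a * |v a - M| ≤ Real.exp (2*s) * |r a - q a| := key1 a
        _ ≤ Real.exp (2*s) * ((∑ b, |r b - q b|)/2) :=
            mul_le_mul_of_nonneg_left (half a) (Real.exp_nonneg _)
    have step2 : q a * |M| ≤ |M| := by
      calc q a * |M| ≤ 1 * |M| := mul_le_mul_of_nonneg_right (hq1 a) (abs_nonneg _)
        _ = |M| := one_mul _
    have tri2 : q a * |v a| ≤ q a * |v a - M| + q a * |M| := by
      rw [← mul_add]
      exact mul_le_mul_of_nonneg_left tri (hq a).le
    linarith
  · have step1 : r a * |v a - M| ≤ Real.exp (2*s) * ((∑ b, |r b - q b|)/2) := by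
      calc r a * |v a - M| ≤ Real.exp (2*s) * |r a - q a| := key2 a
        _ ≤ Real.exp (2*s) * ((∑ b, |r b - q b|)/2) :=
            mul_le_mul_of_nonneg_left (half a) (Real.exp_nonneg _)
    have step2 : r a * |M| ≤ |M| := by
      calc r a * |M| ≤ 1 * |M| := mul_le_mul_of_nonneg_right (hr1 a) (abs_nonneg _)
        _ = |M| := one_mul _
    have tri2 : r a * |v a| ≤ r a * |v a - M| + r a * |M| := by
      rw [← mul_add]
      exact mul_le_mul_of_nonneg_left tri (hr a).le
    linarith

theorem stmt_19 {A : Type*} [Fintype A] [Nonempty A]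
    (P : Matrix A A ℝ) (hP : P + Pᵀ = 0) (η L : ℝ) (hη : 0 < η)
    (hηL : η * L < 1 / 2)
    (hL : L = Finset.univ.sup' Finset.univ_nonempty
      (fun ab : A × A => |P ab.1 ab.2|))
    (pi hpi : ℕ → A → ℝ) (Mn Mh : ℕ → ℝ)
    (hpidist : ∀ t, (∀ a, 0 < pi t a) ∧ ∑ a, pi t a = 1)
    (hhpidist : ∀ t, (∀ a, 0 < hpi t a) ∧ ∑ a, hpi t a = 1)
    (hinit : pi 0 = hpi 1)
    (hupd : ∀ t, 1 ≤ t → ∀ a,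
      Real.log (pi t a) = Real.log (hpi t a) + η * P.mulVec (pi (t - 1)) a - Mn t)
    (hupdh : ∀ t, 1 ≤ t → ∀ a,
      Real.log (hpi (t + 1) a) = Real.log (hpi t a) + η * P.mulVec (pi t) a - Mh (t + 1)) :
    ∀ t, 1 ≤ t →
      max (Finset.univ.sup' Finset.univ_nonempty
            (fun a => hpi t a * |η * P.mulVec (pi t) a|))
          (Finset.univ.sup' Finset.univ_nonempty
            (fun a => hpi (t + 1) a * |η * P.mulVec (pi t) a|)) ≤
        Real.exp (2 * η * L) * (∑ a, |hpi (t + 1) a - hpi t a|) +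
          η * L * (∑ a, |hpi (t + 1) a - pi t a|) := by
  intro t ht
  obtain ⟨hppos, hpsum⟩ := hpidist t
  obtain ⟨hqpos, hqsum⟩ := hhpidist t
  obtain ⟨hrpos, hrsum⟩ := hhpidist (t+1)
  have a0 : A := Classical.arbitrary A
  have hPle : ∀ a b, |P a b| ≤ L := fun a b => by
    rw [hL]
    exact Finset.le_sup' (fun ab : A × A => |P ab.1 ab.2|) (Finset.mem_univ (a, b))
  have hL0 : 0 ≤ L := le_trans (abs_nonneg _) (hPle a0 a0)
  have hmv : ∀ a, P.mulVec (pi t) a = ∑ b, P a b * pi t b := fun a => rfl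
  have hvle : ∀ a, |η * P.mulVec (pi t) a| ≤ η * L := by
    intro a
    rw [abs_mul, abs_of_pos hη]
    apply mul_le_mul_of_nonneg_left _ hη.le
    rw [hmv a]
    calc |∑ b, P a b * pi t b| ≤ ∑ b, |P a b * pi t b| := Finset.abs_sum_le_sum_abs _ _
      _ ≤ ∑ b, L * pi t b := by
          apply Finset.sum_le_sum; intro b _
          rw [abs_mul, abs_of_pos (hppos b)]
          exact mul_le_mul_of_nonneg_right (hPle a b) (hppos b).le
      _ = L := by rw [← Finset.mul_sum, hpsum, mul_one]
  have hskew : ∀ a b, P a b = - P b a := by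
    intro a b
    have h := congrFun (congrFun hP a) b
    simp only [Matrix.add_apply, Matrix.transpose_apply, Matrix.zero_apply] at h
    linarith
  have hz : ∑ a, pi t a * (η * P.mulVec (pi t) a) = 0 := by
    have hS : ∑ a, ∑ b, pi t a * (P a b * pi t b) = 0 := by
      have h1 : ∑ a, ∑ b, pi t a * (P a b * pi t b)
          = ∑ b, ∑ a, pi t a * (P a b * pi t b) := Finset.sum_comm
      have h2 : ∑ b, ∑ a, pi t a * (P a b * pi t b)
          = ∑ b, ∑ a, -(pi t b * (P b a * pi t a)) := by
        apply Finset.sum_congr rfl; intro b _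
        apply Finset.sum_congr rfl; intro a _
        rw [hskew a b]; ring
      have h3 : ∑ b, ∑ a, -(pi t b * (P b a * pi t a))
          = - ∑ b, ∑ a, pi t b * (P b a * pi t a) := by
        simp [Finset.sum_neg_distrib]
      have h4 : ∑ b, ∑ a, pi t b * (P b a * pi t a)
          = ∑ a, ∑ b, pi t a * (P a b * pi t b) := rfl
      have := h1.trans (h2.trans (h3.trans (by rw [h4])))
      linarith
    have h5 : ∑ a, pi t a * (η * P.mulVec (pi t) a)
        = η * ∑ a, ∑ b, pi t a * (P a b * pi t b) := by
      rw [Finset.mul_sum]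
      apply Finset.sum_congr rfl; intro a _
      rw [hmv a, mul_left_comm, Finset.mul_sum]
    rw [h5, hS, mul_zero]
  have hstep : ∀ a, hpi (t+1) a = hpi t a * Real.exp (η * P.mulVec (pi t) a - Mh (t+1)) := by
    intro a
    have h := hupdh t ht a
    have h1 : hpi (t+1) a = Real.exp (Real.log (hpi t a) + η * P.mulVec (pi t) a - Mh (t+1)) := by
      rw [← h, Real.exp_log (hrpos a)]
    rw [h1, show Real.log (hpi t a) + η * P.mulVec (pi t) a - Mh (t+1)
        = Real.log (hpi t a) + (η * P.mulVec (pi t) a - Mh (t+1)) from by ring,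
      Real.exp_add, Real.exp_log (hqpos a)]
  have main := aux_key (pi t) (hpi t) (hpi (t+1)) (fun a => η * P.mulVec (pi t) a)
      (Mh (t+1)) (η*L) (by linarith) hqpos hqsum hrpos hrsum
      (fun a => (hppos a).le) hpsum hvle hz hstep
  have he : (2:ℝ) * η * L = 2 * (η * L) := by ring
  rw [he]
  apply max_le
  · apply Finset.sup'_le
    intro a _
    exact (main a).1
  · apply Finset.sup'_le
    intro a _
    exact (main a).2
end
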